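/- arXiv:1506.03433 — 5 statements merged into one kernel-verified Lean document; each statement's English description precedes it below -/
import Mathlib

section
/- Let X and Y be sets and κ an infinite cardinal. Suppose π : P(X) → P(Y) represents an isomorphism from P(X)/I_κ to P(Y)/I_κ, and suppose f : Y → X witnesses that π is trivial, i.e. π(A) ∼_κ f⁻¹(A) for all A ⊆ X. Then there exist sets E ⊆ X and F ⊆ Y with |X \ E| < κ and |Y \ F| < κ such that f restricted to F is a bijection from F onto E; moreover the inverse bijection witnesses triviality of the inverse isomorphism, i.e. for every A ⊆ Y one has π(f''(A ∩ F)) ∼_κ A (where f''(S) denotes the image of S under f). -/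
open Cardinal Set

universe u

/-- `A ∼_κ B`: the symmetric difference of `A` and `B` has cardinality `< κ`. -/
def Sim {X : Type u} (κ : Cardinal.{u}) (A B : Set X) : Prop :=
  #(↥(symmDiff A B)) < κ

/-- `π : P(X) → P(X)` represents an automorphism of `P(X)/I_κ`. -/
def IsAutoRep {X : Type u} (κ : Cardinal.{u}) (π : Set X → Set X) : Prop :=
  (∀ A B : Set X, Sim κ A B → Sim κ (π A) (π B)) ∧
  (∀ A B : Set X, Sim κ (π (A ∪ B)) (π A ∪ π B)) ∧
  (∀ A : Set X, Sim κ (π Aᶜ) (π A)ᶜ) ∧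
  (∀ B : Set X, ∃ A : Set X, Sim κ (π A) B) ∧
  (∀ A B : Set X, Sim κ (π A) (π B) → Sim κ A B)

/-- `π` is trivial on `Z`: some `f : X → Z` has `π(A) ∼_κ f⁻¹(A)` for all `A ⊆ Z`. -/
def TrivialOn {X : Type u} (κ : Cardinal.{u}) (π : Set X → Set X) (Z : Set X) : Prop :=
  ∃ f : X → X, (∀ x, f x ∈ Z) ∧ ∀ A : Set X, A ⊆ Z → Sim κ (π A) (f ⁻¹' A)

/-- `π` is trivial: some `f : X → X` has `π(A) ∼_κ f⁻¹(A)` for all `A ⊆ X`. -/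
def IsTrivial {X : Type u} (κ : Cardinal.{u}) (π : Set X → Set X) : Prop :=
  ∃ f : X → X, ∀ A : Set X, Sim κ (π A) (f ⁻¹' A)

/-- `π` is cardinality-preserving. -/
def CardPres {X : Type u} (κ : Cardinal.{u}) (π : Set X → Set X) : Prop :=
  ∀ A : Set X, ∃ B : Set X, #(↥B) = #(↥A) ∧ Sim κ (π A) B

/-- `π : P(X) → P(Y)` represents an isomorphism of `P(X)/I_κ` with `P(Y)/I_κ`. -/
def IsIsoRep {X Y : Type u} (κ : Cardinal.{u}) (π : Set X → Set Y) : Prop :=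
  (∀ A B : Set X, Sim κ A B → Sim κ (π A) (π B)) ∧
  (∀ A B : Set X, Sim κ (π (A ∪ B)) (π A ∪ π B)) ∧
  (∀ A : Set X, Sim κ (π Aᶜ) (π A)ᶜ) ∧
  (∀ B : Set Y, ∃ A : Set X, Sim κ (π A) B) ∧
  (∀ A B : Set X, Sim κ (π A) (π B) → Sim κ A B)

section Aux

variable {Z : Type u} {κ : Cardinal.{u}}

lemma sim_symm {A B : Set Z} (h : Sim κ A B) : Sim κ B A := by
  rwa [Sim, symmDiff_comm]

lemma sim_trans (hκ : ℵ₀ ≤ κ) {A B C : Set Z} (h1 : Sim κ A B) (h2 : Sim κ B C) :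
    Sim κ A C := by
  have hsub : symmDiff A C ⊆ symmDiff A B ∪ symmDiff B C := symmDiff_triangle A B C
  calc #(↥(symmDiff A C)) ≤ #(↥(symmDiff A B ∪ symmDiff B C)) :=
        Cardinal.mk_le_mk_of_subset hsub
    _ ≤ #(↥(symmDiff A B)) + #(↥(symmDiff B C)) := Cardinal.mk_union_le _ _
    _ < κ := Cardinal.add_lt_of_lt hκ h1 h2

lemma sim_of_subset_small {A B S : Set Z} (hsub : symmDiff A B ⊆ S)
    (hS : #(↥S) < κ) : Sim κ A B :=
  lt_of_le_of_lt (Cardinal.mk_le_mk_of_subset hsub) hS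

end Aux

theorem stmt0' {X Y : Type u} (κ : Cardinal.{u}) (hκ : ℵ₀ ≤ κ)
    (π : Set X → Set Y) (hπ : IsIsoRep κ π)
    (f : Y → X) (hf : ∀ A : Set X, Sim κ (π A) (f ⁻¹' A)) :
    ∃ (E : Set X) (F : Set Y), #(↥(Eᶜ)) < κ ∧ #(↥(Fᶜ)) < κ ∧
      Set.BijOn f F E ∧ ∀ A : Set Y, Sim κ (π (f '' (A ∩ F))) A := by
  classical
  obtain ⟨-, -, -, hex, hinv⟩ := hπ
  -- the complement of the range of f is small
  have hrange : #(↥((Set.range f)ᶜ)) < κ := by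
    have h1 : Sim κ (π ((Set.range f)ᶜ)) (π ∅) := by
      have ha := hf ((Set.range f)ᶜ)
      have hb := hf ∅
      have hpre : f ⁻¹' ((Set.range f)ᶜ) = (∅ : Set Y) := by
        ext y; simp
      rw [hpre] at ha
      rw [Set.preimage_empty] at hb
      exact sim_trans hκ ha (sim_symm hb)
    have h2 := hinv _ _ h1
    have h3 : symmDiff ((Set.range f)ᶜ) (∅ : Set X) = (Set.range f)ᶜ := by
      simp [symmDiff_def]
    rwa [Sim, h3] at h2
  -- matchings on pairs identified by f
  set Good : Set (Y × Y) → Prop := fun M =>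
    (∀ e ∈ M, e.1 ≠ e.2 ∧ f e.1 = f e.2) ∧
    ∀ e ∈ M, ∀ e' ∈ M, e ≠ e' →
      e.1 ≠ e'.1 ∧ e.1 ≠ e'.2 ∧ e.2 ≠ e'.1 ∧ e.2 ≠ e'.2 with hGoodDef
  obtain ⟨M, hM⟩ : ∃ M, Maximal (fun M => M ∈ {N | Good N}) M := by
    apply zorn_subset
    intro c hc hchain
    refine ⟨⋃₀ c, ⟨?_, ?_⟩, fun s hs => subset_sUnion_of_mem hs⟩
    · rintro e ⟨m, hm, he⟩
      exact (hc hm).1 e he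
    · rintro e ⟨m, hm, he⟩ e' ⟨m', hm', he'⟩ hne
      rcases hchain.total hm hm' with h | h
      · exact (hc hm').2 e (h he) e' he' hne
      · exact (hc hm).2 e he e' (h he') hne
  have hMGood : Good M := hM.1
  -- each vertex belongs to at most one edge
  have hvert : ∀ e ∈ M, ∀ e' ∈ M, ∀ v : Y,
      (v = e.1 ∨ v = e.2) → (v = e'.1 ∨ v = e'.2) → e = e' := by
    intro e he e' he' v hv hv'
    by_contra hne
    obtain ⟨h1, h2, h3, h4⟩ := hMGood.2 e he e' he' hne
    rcases hv with rfl | rfl <;> rcases hv' with h | h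
    · exact h1 h
    · exact h2 h
    · exact h3 h
    · exact h4 h
  set V : Set Y := {y | ∃ e ∈ M, y = e.1 ∨ y = e.2} with hVdef
  -- f is injective off V
  have hinj : Set.InjOn f Vᶜ := by
    intro y hy y' hy' hfy
    by_contra hne
    have hgood : Good (insert (y, y') M) := by
      constructor
      · rintro e (rfl | he)
        · exact ⟨hne, hfy⟩
        · exact hMGood.1 e he
      · rintro e (rfl | he) e' (rfl | he') hnee
        · exact absurd rfl hnee
        · refine ⟨?_, ?_, ?_, ?_⟩ <;> intro h
          · exact hy ⟨e', he', Or.inl h⟩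
          · exact hy ⟨e', he', Or.inr h⟩
          · exact hy' ⟨e', he', Or.inl h⟩
          · exact hy' ⟨e', he', Or.inr h⟩
        · refine ⟨?_, ?_, ?_, ?_⟩ <;> intro h
          · exact hy ⟨e, he, Or.inl h.symm⟩
          · exact hy' ⟨e, he, Or.inl h.symm⟩
          · exact hy ⟨e, he, Or.inr h.symm⟩
          · exact hy' ⟨e, he, Or.inr h.symm⟩
        · exact hMGood.2 e he e' he' hnee
    have hsub := hM.2 hgood (Set.subset_insert _ M)
    have hmem : (y, y') ∈ M := hsub (Set.mem_insert _ _)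
    exact hy ⟨(y, y'), hmem, Or.inl rfl⟩
  -- the matching is small
  have hMcard : #(↥M) < κ := by
    set P : Set Y := Prod.fst '' M with hPdef
    obtain ⟨A, hA⟩ := hex P
    have hSim : Sim κ (f ⁻¹' A) P := sim_trans hκ (sim_symm (hf A)) hA
    set D : Set Y := symmDiff (f ⁻¹' A) P with hDdef
    have hchoice : ∀ e : ↥M, (if f (e : Y × Y).1 ∈ A then (e : Y × Y).2
        else (e : Y × Y).1) ∈ D := by
      rintro ⟨e, he⟩
      obtain ⟨hne, hfe⟩ := hMGood.1 e he
      dsimp only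
      by_cases hcase : f e.1 ∈ A
      · rw [if_pos hcase]
        refine Set.mem_symmDiff.mpr (Or.inl ⟨by rw [Set.mem_preimage, ← hfe]; exact hcase, ?_⟩)
        rintro ⟨e', he', hv⟩
        have heq : e = e' := hvert e he e' he' e.2 (Or.inr rfl) (Or.inl hv.symm)
        exact hne (by rw [heq] at hv ⊢; exact hv)
      · rw [if_neg hcase]
        exact Set.mem_symmDiff.mpr (Or.inr ⟨⟨e, he, rfl⟩, hcase⟩)
    have hinjφ : Function.Injective
        (fun e : ↥M => (⟨_, hchoice e⟩ : ↥D)) := by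
      rintro ⟨e, he⟩ ⟨e', he'⟩ hEq
      have hEq' : (if f e.1 ∈ A then e.2 else e.1) = (if f e'.1 ∈ A then e'.2 else e'.1) :=
        congrArg Subtype.val hEq
      have hv : (if f e.1 ∈ A then e.2 else e.1) = e.1 ∨
          (if f e.1 ∈ A then e.2 else e.1) = e.2 := by
        by_cases h : f e.1 ∈ A <;> simp [h]
      have hv' : (if f e.1 ∈ A then e.2 else e.1) = e'.1 ∨
          (if f e.1 ∈ A then e.2 else e.1) = e'.2 := by
        rw [hEq']; by_cases h : f e'.1 ∈ A <;> simp [h]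
      exact Subtype.ext (hvert e he e' he' _ hv hv')
    exact lt_of_le_of_lt (Cardinal.mk_le_of_injective hinjφ) hSim
  -- V is small
  have hVcard : #(↥V) < κ := by
    have hsub : V ⊆ (Prod.fst '' M) ∪ (Prod.snd '' M) := by
      rintro y ⟨e, he, rfl | rfl⟩
      · exact Or.inl ⟨e, he, rfl⟩
      · exact Or.inr ⟨e, he, rfl⟩
    calc #(↥V) ≤ #(↥((Prod.fst '' M) ∪ (Prod.snd '' M))) := Cardinal.mk_le_mk_of_subset hsub
      _ ≤ #(↥(Prod.fst '' M)) + #(↥(Prod.snd '' M)) := Cardinal.mk_union_le _ _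
      _ < κ := Cardinal.add_lt_of_lt hκ
          (lt_of_le_of_lt Cardinal.mk_image_le hMcard)
          (lt_of_le_of_lt Cardinal.mk_image_le hMcard)
  refine ⟨f '' Vᶜ, Vᶜ, ?_, ?_, hinj.bijOn_image, ?_⟩
  · -- complement of the image is small
    have hsub : (f '' Vᶜ)ᶜ ⊆ (Set.range f)ᶜ ∪ f '' V := by
      intro x hx
      by_cases hr : x ∈ Set.range f
      · obtain ⟨y, rfl⟩ := hr
        by_cases hyV : y ∈ V
        · exact Or.inr ⟨y, hyV, rfl⟩
        · exact absurd ⟨y, hyV, rfl⟩ hx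
      · exact Or.inl hr
    calc #(↥((f '' Vᶜ)ᶜ)) ≤ #(↥((Set.range f)ᶜ ∪ f '' V)) := Cardinal.mk_le_mk_of_subset hsub
      _ ≤ #(↥((Set.range f)ᶜ)) + #(↥(f '' V)) := Cardinal.mk_union_le _ _
      _ < κ := Cardinal.add_lt_of_lt hκ hrange
          (lt_of_le_of_lt Cardinal.mk_image_le hVcard)
  · rwa [compl_compl]
  · intro A
    have h1 : Sim κ (π (f '' (A ∩ Vᶜ))) (f ⁻¹' (f '' (A ∩ Vᶜ))) := hf _
    have h2 : symmDiff (f ⁻¹' (f '' (A ∩ Vᶜ))) A ⊆ V := by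
      intro y hy
      by_contra hyV
      rcases Set.mem_symmDiff.mp hy with ⟨hyS, hyA⟩ | ⟨hyA, hyS⟩
      · obtain ⟨y', ⟨hy'A, hy'V⟩, hfy⟩ := hyS
        exact hyA (hinj hy'V hyV hfy ▸ hy'A)
      · exact hyS ⟨y, ⟨hyA, hyV⟩, rfl⟩
    exact sim_trans hκ h1 (sim_of_subset_small h2 hVcard)

/-- If `f : Y → X` witnesses that the isomorphism `π : P(X)/I_κ → P(Y)/I_κ` is trivial, then
`f` restricts to a bijection between co-small sets, and the inverse bijection witnesses the
triviality of the inverse isomorphism. -/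
theorem stmt0 {X Y : Type u} (κ : Cardinal.{u}) (hκ : ℵ₀ ≤ κ)
    (π : Set X → Set Y) (hπ : IsIsoRep κ π)
    (f : Y → X) (hf : ∀ A : Set X, Sim κ (π A) (f ⁻¹' A)) :
    ∃ (E : Set X) (F : Set Y), #(↥(Eᶜ)) < κ ∧ #(↥(Fᶜ)) < κ ∧
      Set.BijOn f F E ∧ ∀ A : Set Y, Sim κ (π (f '' (A ∩ F))) A :=
  stmt0' κ hκ π hπ f hf
end

section
/- Let Γ be the collection of all open subsets of Cantor space 2^ω. Then CSN(Γ) ≥ cov(M), where cov(M) is the least cardinality of a family of meager subsets of 2^ω whose union is all of 2^ω. -/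
open Cardinal Set

/-- Cantor space `2^ω`. -/
abbrev Cantor : Type := ℕ → Bool

/-- `F` is a family witnessing the Cofinal Selection Number for `Γ`. -/
def CSNFamily (Γ : Set (Set Cantor)) (F : Set ((ℕ → Cantor) × (ℕ → Cantor))) : Prop :=
  (∀ p ∈ F, Dense (Set.range p.1 ∪ Set.range p.2)) ∧
  (∀ p ∈ F, ∀ q ∈ F, p.2 ≠ q.2 → Set.range p.2 ∩ Set.range q.2 = ∅) ∧
  (∀ p ∈ F, ∀ n : ℕ, p.1 n ≠ p.2 n) ∧
  (∀ A ∈ Γ, #(↥{p ∈ F | {n : ℕ | Xor' (p.1 n ∈ A) (p.2 n ∈ A)}.Infinite}) < #(↥F))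

/- The Cofinal Selection Number of `Γ`: the least cardinality of a CSN family for `Γ`,
or `(2^ℵ₀)⁺` if there is no such family. -/
open Classical in
noncomputable def CSN (Γ : Set (Set Cantor)) : Cardinal :=
  if ∃ F, CSNFamily Γ F then
    sInf {c : Cardinal | ∃ F, CSNFamily Γ F ∧ #(↥F) = c}
  else Order.succ (2 ^ ℵ₀)

/-- `cov(M)`: the least cardinality of a family of meager subsets of Cantor space whose
union is the whole space. -/
noncomputable def covMeager : Cardinal :=
  sInf {c : Cardinal | ∃ 𝒜 : Set (Set Cantor),
    (∀ A ∈ 𝒜, IsMeagre A) ∧ ⋃₀ 𝒜 = Set.univ ∧ #(↥𝒜) = c}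

/-! Every point `x` of Cantor space codes the open set `evenDiffSet x` of the points whose first
disagreement with `x` occurs at an even index. If `f n` lies in a small cylinder, the code can be
extended inside that cylinder so that `f n` and `g n` first disagree with it at indices of
different parity; hence, for a pair `(f, g)` with dense range, the codes whose open set separates
`f n` from `g n` for infinitely many `n` form a comeagre set. A family of fewer than `cov(M)` pairs
therefore admits a single code separating every pair infinitely often, and its open set violates
the last clause of `CSNFamily`. -/

open Filter Topology PiNat

theorem PiNat.firstDiff_eq_of_mem_cylinder {E : ℕ → Type*} {x y : ∀ n, E n} {n : ℕ}
    (hxy : x ∈ cylinder y n) (hn : x n ≠ y n) : firstDiff x y = n :=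
  le_antisymm (not_lt.1 fun h => hn (apply_eq_of_lt_firstDiff h))
    ((mem_cylinder_iff_le_firstDiff (ne_of_apply_ne (· n) hn) n).1 hxy)

theorem Dense.image_Ici_union_image_Ici {X : Type*} [TopologicalSpace X] [T1Space X]
    [∀ x : X, (𝓝[≠] x).NeBot] {f g : ℕ → X} (hd : Dense (range f ∪ range g)) (m : ℕ) :
    Dense (f '' Ici m ∪ g '' Ici m) := by
  refine (hd.sdiff_finite (((finite_Iio m).image f).union ((finite_Iio m).image g))).mono ?_
  rintro _ ⟨⟨n, rfl⟩ | ⟨n, rfl⟩, hn⟩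
  · exact Or.inl ⟨n, mem_Ici.2 (not_lt.1 fun h => hn (Or.inl ⟨n, h, rfl⟩)), rfl⟩
  · exact Or.inr ⟨n, mem_Ici.2 (not_lt.1 fun h => hn (Or.inr ⟨n, h, rfl⟩)), rfl⟩

namespace Cantor

instance nhdsNE_neBot (x : Cantor) : (𝓝[≠] x).NeBot := by
  let u : ℕ → Cantor := fun n => Function.update x n (!x n)
  have hu : Tendsto u atTop (𝓝[≠] x) := by
    refine tendsto_nhdsWithin_iff.2
      ⟨tendsto_pi_nhds.2 fun i => tendsto_const_nhds.congr' ?_, Eventually.of_forall fun n => ?_⟩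
    · filter_upwards [eventually_gt_atTop i] with n hn
      exact (Function.update_of_ne hn.ne _ _).symm
    · exact ne_of_apply_ne (· n) (by simp [u])
  exact hu.neBot

def evenDiffSet (x : Cantor) : Set Cantor := {z | z ≠ x ∧ Even (firstDiff z x)}

theorem mem_evenDiffSet_iff {x z : Cantor} {n : ℕ} (hz : z ∈ cylinder x n) (hn : z n ≠ x n) :
    z ∈ evenDiffSet x ↔ Even n := by
  rw [evenDiffSet, mem_ofPred_eq, firstDiff_eq_of_mem_cylinder hz hn]
  exact and_iff_right (ne_of_apply_ne (· n) hn)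

theorem isOpen_evenDiffSet (x : Cantor) : IsOpen (evenDiffSet x) := by
  refine isOpen_iff_forall_mem_open.2 fun z hz => ⟨cylinder z (firstDiff z x + 1), fun w hw => ?_,
    isOpen_cylinder _ _ _, self_mem_cylinder _ _⟩
  have hwx : w ∈ cylinder x (firstDiff z x) :=
    cylinder_eq_cylinder_of_le_firstDiff z x le_rfl ▸ cylinder_anti z (Nat.le_succ _) hw
  have hwn : w (firstDiff z x) ≠ x (firstDiff z x) :=
    hw _ (Nat.lt_succ_self _) ▸ apply_firstDiff_ne hz.1
  exact (mem_evenDiffSet_iff hwx hwn).2 hz.2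

def separatingCodes (c c' : Cantor) : Set Cantor :=
  {x | Xor (c ∈ evenDiffSet x) (c' ∈ evenDiffSet x)}

theorem separatingCodes_comm (c c' : Cantor) : separatingCodes c c' = separatingCodes c' c := by
  ext x
  exact iff_of_eq (_root_.xor_comm _ _)

theorem exists_mem_cylinder_mem_interior_separatingCodes {c c' : Cantor} (hne : c ≠ c') (j : ℕ) :
    ∃ x ∈ cylinder c j, x ∈ interior (separatingCodes c c') := by
  set k := firstDiff c c'
  -- `K` exceeds `j` and `k` and has the opposite parity to `k`
  set K := 2 * j + k + 1
  have hparity : Even K ↔ ¬Even k := by simp [K, Nat.even_add_one, Nat.even_add]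
  refine ⟨Function.update c K (!c K), cylinder_anti _ (by omega) (update_mem_cylinder _ _ _),
    mem_interior.2 ⟨cylinder _ (K + 1), fun x hx => ?_, isOpen_cylinder _ _ _,
      self_mem_cylinder _ _⟩⟩
  have hxc : ∀ i < K, x i = c i := fun i hi => by
    rw [hx i (by omega), Function.update_of_ne hi.ne]
  have hc : c ∈ evenDiffSet x ↔ Even K := by
    refine mem_evenDiffSet_iff (fun i hi => (hxc i hi).symm) ?_
    rw [hx K (by omega), Function.update_self]
    simp
  have hc' : c' ∈ evenDiffSet x ↔ Even k := by
    refine mem_evenDiffSet_iff (fun i hi => ?_) fun h => apply_firstDiff_ne hne ?_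
    · rw [hxc i (by omega), apply_eq_of_lt_firstDiff hi]
    · rw [h, hxc k (by omega)]
  change Xor _ _
  rw [hc, hc', hparity]
  tauto

theorem dense_iUnion_interior_separatingCodes {f g : ℕ → Cantor}
    (hd : Dense (range f ∪ range g)) (hfg : ∀ n, f n ≠ g n) (m : ℕ) :
    Dense (⋃ n ≥ m, interior (separatingCodes (f n) (g n))) := by
  refine (isTopologicalBasis_cylinders _).dense_iff.2 ?_
  rintro _ ⟨y, j, rfl⟩ -
  obtain ⟨c, hcy, hc⟩ := (hd.image_Ici_union_image_Ici m).inter_open_nonempty _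
    (isOpen_cylinder _ y j) ⟨y, self_mem_cylinder y j⟩
  rw [← mem_cylinder_iff_eq.1 hcy]
  rcases hc with ⟨n, hn, rfl⟩ | ⟨n, hn, rfl⟩
  · obtain ⟨x, hxc, hx⟩ := exists_mem_cylinder_mem_interior_separatingCodes (hfg n) j
    exact ⟨x, hxc, mem_biUnion hn hx⟩
  · obtain ⟨x, hxc, hx⟩ := exists_mem_cylinder_mem_interior_separatingCodes (hfg n).symm j
    exact ⟨x, hxc, mem_biUnion hn (separatingCodes_comm (g n) (f n) ▸ hx)⟩

theorem isMeagre_setOf_finite_separatingCodes {f g : ℕ → Cantor}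
    (hd : Dense (range f ∪ range g)) (hfg : ∀ n, f n ≠ g n) :
    IsMeagre {x : Cantor | ¬{n | x ∈ separatingCodes (f n) (g n)}.Infinite} := by
  have hres : ⋂ m, ⋃ n ≥ m, interior (separatingCodes (f n) (g n)) ∈ residual Cantor :=
    countable_iInter_mem.2 fun m => residual_of_dense_open
      (isOpen_biUnion fun _ _ => isOpen_interior) (dense_iUnion_interior_separatingCodes hd hfg m)
  refine mem_of_superset hres fun x hx => ?_
  rw [compl_ofPred, mem_ofPred_eq, not_not]
  refine Nat.frequently_atTop_iff_infinite.1 (frequently_atTop.2 fun m => ?_)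
  obtain ⟨n, hn, hxn⟩ := mem_iUnion₂.1 (mem_iInter.1 hx m)
  exact ⟨n, hn, interior_subset hxn⟩

theorem covMeager_le_mk {ι : Type} (B : ι → Set Cantor) (hB : ∀ i, IsMeagre (B i))
    (hcover : ⋃ i, B i = Set.univ) : covMeager ≤ #ι := by
  rw [covMeager]
  exact le_trans (csInf_le' ⟨range B, forall_mem_range.2 hB, sUnion_range B ▸ hcover, rfl⟩)
    mk_range_le

theorem covMeager_le_continuum : covMeager ≤ 2 ^ ℵ₀ := by
  have h := covMeager_le_mk (fun z : Cantor => {z})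
    (fun z => (isClosed_singleton.isNowhereDense_iff.2 (interior_singleton z)).isMeagre)
    (iUnion_of_singleton _)
  simpa [mk_arrow] using h

theorem covMeager_le_mk_of_csnFamily {F : Set ((ℕ → Cantor) × (ℕ → Cantor))}
    (hF : CSNFamily {A | IsOpen A} F) : covMeager ≤ #F := by
  obtain ⟨hdense, -, hne, hsmall⟩ := hF
  refine covMeager_le_mk
    (fun p : F => {x | ¬{n | x ∈ separatingCodes (p.1.1 n) (p.1.2 n)}.Infinite})
    (fun p => isMeagre_setOf_finite_separatingCodes (hdense p p.2) (hne p p.2)) ?_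
  refine eq_univ_of_forall fun x => by_contra fun hx => ?_
  simp only [mem_iUnion, mem_ofPred_eq, not_exists, not_not] at hx
  refine (hsmall (evenDiffSet x) (isOpen_evenDiffSet x)).ne ?_
  rw [sep_eq_self_iff_mem_true.2 fun p hp => hx ⟨p, hp⟩]

end Cantor

/-- `CSN(Σ⁰₁) ≥ cov(M)`. -/
theorem stmt8 : covMeager ≤ CSN {A : Set Cantor | IsOpen A} := by
  rw [CSN]
  split_ifs with h
  · obtain ⟨F, hF⟩ := h
    exact le_csInf ⟨#F, F, hF, rfl⟩ fun _ ⟨F', hF', hc⟩ =>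
      hc ▸ Cantor.covMeager_le_mk_of_csnFamily hF'
  · exact Cantor.covMeager_le_continuum.trans (Order.le_succ _)
end

section
/- Suppose there exists a Q_B-set X ⊆ 2^ω of cardinality λ, where cf(λ) > ω. Then the following are equivalent: (1) there exist a set L of cardinality λ and a map representing a cardinality-preserving automorphism of P(L)/Ctble which is not trivial; (2) there exists a Q_B-set Y ⊆ 2^ω such that X △ Y is uncountable and for every Borel set B ⊆ 2^ω, |B ∩ X| + ℵ₀ = |B ∩ Y| + ℵ₀. -/
open Cardinal Set

universe u

/-- `X ⊆ 2^ω` is a `Q_B`-set: every subset of `X` is the intersection of `X` with a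
Borel subset of `2^ω`. -/
def IsQB (X : Set Cantor) : Prop :=
  ∀ Y : Set Cantor, Y ⊆ X →
    ∃ B : Set Cantor, @MeasurableSet Cantor (borel Cantor) B ∧ B ∩ X = Y

/-!
Transport everything to `2^ω` along an injection `h : L → 2^ω` onto `X`; as `X` is a `Q_B`-set,
every `A ⊆ L` is `h⁻¹ B` for some Borel `B`.

(1) ⇒ (2). Modulo countable sets, `B ↦ π (h⁻¹ B)` is a σ-homomorphism on the Borel sets, so it is
the preimage map of the point map `y` whose `n`-th coordinate at `l` says whether
`l ∈ π (h⁻¹ Cₙ)`, `Cₙ` the `n`-th cylinder. The fibres of `y` are countable: an uncountable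
fibre `y⁻¹ {c}` would be `π A` with `A` uncountable; split `A` into uncountable halves
`A ∩ h⁻¹ B` and `A \ h⁻¹ B`; the half on the side of `B` not containing `c` is sent both into
`y⁻¹ {c}` and away from it, so it is countable. Hence `Y = range y` is a `Q_B`-set meeting each
Borel set in as many points as `X` does (`π` preserves cardinality), and if `X △ Y` were
countable, `h⁻¹ ∘ y` would trivialize `π`.

(2) ⇒ (1). `X` and `Y` have equal size; let `k : X → Y` be a bijection. The inclusion `h` of `X`
and `k` give the same Borel sets countable preimages, so `h⁻¹ B ↦ k⁻¹ B` is a well-defined,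
cardinality-preserving automorphism of `P(X)/Ctble`. A trivializing `f` would give
`k = h ∘ f` off a countable set, as the cylinders separate points, so `X △ Y` would be countable.
-/

open Filter Function MeasureTheory

instance Filter.countableInterFilter_cocountable {α : Type*} :
    CountableInterFilter (cocountable : Filter α) :=
  CardinalInterFilter.toCountableInterFilter _ aleph0_lt_aleph_one

section Cocountable

variable {α : Type*} {s t : Set α}

theorem eventuallyEq_cocountable_iff : s =ᶠ[cocountable] t ↔ (symmDiff s t).Countable := by
  rw [eventuallyEq_set, Filter.Eventually, mem_cocountable]
  convert Iff.rfl using 2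
  ext x
  simp only [mem_compl_iff, mem_ofPred_eq, mem_symmDiff]
  tauto

theorem eventuallyLE_cocountable_iff : s ≤ᶠ[cocountable] t ↔ (s \ t).Countable := by
  change {x | s x ≤ t x} ∈ cocountable ↔ _
  rw [mem_cocountable]
  convert Iff.rfl using 2
  ext x
  simp only [mem_compl_iff, mem_ofPred_eq, le_Prop_eq, Classical.not_imp, Set.mem_sdiff]
  rfl

theorem eventuallyEq_empty_cocountable_iff : s =ᶠ[cocountable] (∅ : Set α) ↔ s.Countable := by
  rw [eventuallyEq_cocountable_iff, symmDiff_eq_left.2 (rfl : (∅ : Set α) = ⊥)]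

theorem Filter.EventuallyEq.countable_iff (h : s =ᶠ[cocountable] t) :
    s.Countable ↔ t.Countable := by
  rw [← eventuallyEq_empty_cocountable_iff, ← eventuallyEq_empty_cocountable_iff]
  exact ⟨h.symm.trans, h.trans⟩

theorem union_eventuallyEq_right_iff {l : Filter α} :
    (s ∪ t : Set α) =ᶠ[l] t ↔ s ≤ᶠ[l] t := by
  rw [eventuallyEq_set]
  refine eventually_congr (Eventually.of_forall fun x => ?_)
  simp only [mem_union, or_iff_right_iff_imp]
  rfl

theorem iUnion_eventuallyLE {ι : Type*} [Countable ι] {l : Filter α} [CountableInterFilter l]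
    {s : ι → Set α} (h : ∀ i, s i ≤ᶠ[l] t) : ⋃ i, s i ≤ᶠ[l] t :=
  (Filter.EventuallyLE.countable_iUnion h).trans (iUnion_subset fun _ => subset_rfl).eventuallyLE

end Cocountable

theorem sim_aleph_one_iff {α : Type u} {s t : Set α} :
    Sim (aleph 1) s t ↔ s =ᶠ[cocountable] t := by
  rw [eventuallyEq_cocountable_iff, Sim, lt_aleph_one_iff, le_aleph0_iff_set_countable]

theorem Set.Countable.preimage_of_countable_fibers {α β : Type*} {f : α → β}
    (hf : ∀ b, (f ⁻¹' {b}).Countable) {t : Set β} (ht : t.Countable) : (f ⁻¹' t).Countable := by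
  rw [← biUnion_preimage_singleton]
  exact ht.biUnion fun b _ => hf b

section Cardinality

variable {α β : Type u}

theorem Cardinal.eq_of_add_aleph0_eq {a b : Cardinal} (h : a + ℵ₀ = b + ℵ₀) (ha : ℵ₀ < a) :
    a = b := by
  rw [add_eq_max' le_rfl, add_eq_max' le_rfl, max_eq_left ha.le] at h
  rw [h, max_eq_left]
  by_contra hb
  rw [max_eq_right (not_le.1 hb).le] at h
  exact ha.ne' h

theorem Set.Countable.of_mk_add_aleph0_eq {s : Set α} {t : Set β} (h : #s + ℵ₀ = #t + ℵ₀)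
    (ht : t.Countable) : s.Countable := by
  rw [← le_aleph0_iff_set_countable] at ht ⊢
  calc #s ≤ #s + ℵ₀ := self_le_add_right _ _
    _ = ℵ₀ := by rw [h, add_eq_right le_rfl ht]

theorem mk_eq_of_mk_add_aleph0_eq {s : Set α} {t : Set β} (h : #s + ℵ₀ = #t + ℵ₀)
    (hs : ¬ s.Countable) : #s = #t :=
  Cardinal.eq_of_add_aleph0_eq h (not_le.1 (mt le_aleph0_iff_set_countable.1 hs))

theorem mk_add_aleph0_le_of_eventuallyLE {s t : Set α} (h : s ≤ᶠ[cocountable] t) :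
    #s + ℵ₀ ≤ #t + ℵ₀ :=
  calc #s + ℵ₀ ≤ #(↥(t ∪ s \ t)) + ℵ₀ := by
        rw [union_sdiff_self]
        gcongr
        exact mk_le_mk_of_subset subset_union_right
    _ ≤ #t + #(↥(s \ t)) + ℵ₀ := by gcongr; exact mk_union_le _ _
    _ ≤ #t + ℵ₀ + ℵ₀ := by
        gcongr; exact le_aleph0_iff_set_countable.2 (eventuallyLE_cocountable_iff.1 h)
    _ = #t + ℵ₀ := by rw [add_assoc, aleph0_add_aleph0]

theorem mk_add_aleph0_eq_of_eventuallyEq {s t : Set α} (h : s =ᶠ[cocountable] t) :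
    #s + ℵ₀ = #t + ℵ₀ :=
  (mk_add_aleph0_le_of_eventuallyLE h.le).antisymm (mk_add_aleph0_le_of_eventuallyLE h.symm.le)

theorem exists_mk_eq_eventuallyEq_of_mk_add_aleph0_eq {s t : Set α}
    (h : #s + ℵ₀ = #t + ℵ₀) : ∃ u : Set α, #u = #s ∧ t =ᶠ[cocountable] u := by
  by_cases hs : s.Countable
  · have ht : t.Countable := .of_mk_add_aleph0_eq h.symm hs
    exact ⟨s, rfl, eventuallyEq_cocountable_iff.2 ((ht.union hs).mono symmDiff_subset_union)⟩
  · exact ⟨t, (mk_eq_of_mk_add_aleph0_eq h hs).symm, .rfl⟩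

theorem mk_preimage_add_aleph0_eq_of_countable_fibers (f : α → β)
    (hf : ∀ b, (f ⁻¹' {b}).Countable) (t : Set β) :
    #(↥(f ⁻¹' t)) + ℵ₀ = #(↥(t ∩ range f)) + ℵ₀ := by
  refine le_antisymm ?_ ?_
  · have hcover : f ⁻¹' t = ⋃ b ∈ t ∩ range f, f ⁻¹' {b} := by
      rw [biUnion_preimage_singleton, preimage_inter_range]
    calc #(↥(f ⁻¹' t)) + ℵ₀ ≤ #(↥(t ∩ range f)) * ℵ₀ + ℵ₀ := by
          rw [hcover]
          gcongr
          exact (mk_biUnion_le _ _).trans (by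
            gcongr; exact ciSup_le' fun b => le_aleph0_iff_set_countable.2 (hf b))
      _ ≤ #(↥(t ∩ range f)) + ℵ₀ := by
          rw [add_eq_max' le_rfl, add_eq_max' le_rfl]
          exact max_le ((mul_le_max _ _).trans (by simp)) (le_max_right _ _)
  · gcongr
    rw [← image_preimage_eq_inter_range]
    exact mk_image_le

theorem mk_preimage_eq_mk_inter_range {f : α → β} (hf : Injective f) (t : Set β) :
    #(↥(f ⁻¹' t)) = #(↥(t ∩ range f)) := by
  rw [← preimage_inter_range, mk_preimage_of_injective_of_subset_range _ _ hf inter_subset_right]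

theorem exists_subset_not_countable_and_diff {s : Set α} (hs : ¬ s.Countable) :
    ∃ t ⊆ s, ¬ t.Countable ∧ ¬ (s \ t).Countable := by
  rw [← le_aleph0_iff_set_countable, not_le] at hs
  obtain ⟨e⟩ : Nonempty (s ⊕ s ≃ s) := Cardinal.eq.1 (by simpa using add_eq_self hs.le)
  have hinj (g : s → s ⊕ s) (hg : Injective g) : #(range (Subtype.val ∘ e ∘ g)) = #s :=
    mk_range_eq _ (Subtype.val_injective.comp (e.injective.comp hg))
  refine ⟨range (Subtype.val ∘ e ∘ Sum.inl), ?_, ?_, ?_⟩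
  · rintro _ ⟨a, rfl⟩
    exact (e (Sum.inl a)).2
  · rw [← le_aleph0_iff_set_countable, hinj _ Sum.inl_injective]
    exact hs.not_ge
  · rw [← le_aleph0_iff_set_countable, not_le]
    refine hs.trans_le ((hinj _ Sum.inr_injective).symm.le.trans (mk_le_mk_of_subset ?_))
    rintro _ ⟨a, rfl⟩
    refine ⟨(e (Sum.inr a)).2, ?_⟩
    rintro ⟨b, hb⟩
    simpa using e.injective (Subtype.ext hb)

end Cardinality

theorem isAutoRep_aleph_one_iff {L : Type u} {π : Set L → Set L} :
    IsAutoRep (aleph 1) π ↔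
      (∀ A B : Set L, A =ᶠ[cocountable] B → π A =ᶠ[cocountable] π B) ∧
      (∀ A B : Set L, π (A ∪ B) =ᶠ[cocountable] (π A ∪ π B : Set L)) ∧
      (∀ A : Set L, π Aᶜ =ᶠ[cocountable] (π A)ᶜ) ∧
      (∀ B : Set L, ∃ A, π A =ᶠ[cocountable] B) ∧
      (∀ A B : Set L, π A =ᶠ[cocountable] π B → A =ᶠ[cocountable] B) := by
  simp only [IsAutoRep, sim_aleph_one_iff]
  exact Iff.rfl

namespace IsAutoRep

variable {L : Type u} {π : Set L → Set L} {A B : Set L}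

theorem congr (hπ : IsAutoRep (aleph 1) π) (h : A =ᶠ[cocountable] B) :
    π A =ᶠ[cocountable] π B :=
  (isAutoRep_aleph_one_iff.1 hπ).1 A B h

theorem union (hπ : IsAutoRep (aleph 1) π) (A B : Set L) :
    π (A ∪ B) =ᶠ[cocountable] (π A ∪ π B : Set L) :=
  (isAutoRep_aleph_one_iff.1 hπ).2.1 A B

theorem compl (hπ : IsAutoRep (aleph 1) π) (A : Set L) : π Aᶜ =ᶠ[cocountable] (π A)ᶜ :=
  (isAutoRep_aleph_one_iff.1 hπ).2.2.1 A

theorem exists_eventuallyEq (hπ : IsAutoRep (aleph 1) π) (B : Set L) :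
    ∃ A, π A =ᶠ[cocountable] B :=
  (isAutoRep_aleph_one_iff.1 hπ).2.2.2.1 B

theorem eventuallyEq_of_map (hπ : IsAutoRep (aleph 1) π) (h : π A =ᶠ[cocountable] π B) :
    A =ᶠ[cocountable] B :=
  (isAutoRep_aleph_one_iff.1 hπ).2.2.2.2 A B h

theorem empty (hπ : IsAutoRep (aleph 1) π) : π ∅ =ᶠ[cocountable] (∅ : Set L) := by
  obtain ⟨A, hA⟩ := hπ.exists_eventuallyEq ∅
  have h : (π ∅ ∪ π A : Set L) =ᶠ[cocountable] (∅ : Set L) := by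
    have hunion := hπ.union ∅ A
    rw [empty_union] at hunion
    exact hunion.symm.trans hA
  exact (subset_union_left.eventuallyLE.trans h.le).antisymm (empty_subset _).eventuallyLE

theorem mono (hπ : IsAutoRep (aleph 1) π) (h : A ≤ᶠ[cocountable] B) :
    π A ≤ᶠ[cocountable] π B :=
  subset_union_left.eventuallyLE.trans
    ((hπ.union A B).symm.trans (hπ.congr (union_eventuallyEq_right_iff.2 h))).le

theorem le_of_map (hπ : IsAutoRep (aleph 1) π) (h : π A ≤ᶠ[cocountable] π B) :
    A ≤ᶠ[cocountable] B :=
  union_eventuallyEq_right_iff.1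
    (hπ.eventuallyEq_of_map ((hπ.union A B).trans (union_eventuallyEq_right_iff.2 h)))

theorem countable_iff (hπ : IsAutoRep (aleph 1) π) : (π A).Countable ↔ A.Countable := by
  rw [← eventuallyEq_empty_cocountable_iff, ← eventuallyEq_empty_cocountable_iff]
  exact ⟨fun h => hπ.eventuallyEq_of_map (h.trans hπ.empty.symm),
    fun h => (hπ.congr h).trans hπ.empty⟩

theorem iUnion (hπ : IsAutoRep (aleph 1) π) (A : ℕ → Set L) :
    π (⋃ n, A n) =ᶠ[cocountable] ⋃ n, π (A n) := by
  obtain ⟨C, hC⟩ := hπ.exists_eventuallyEq (⋃ n, π (A n))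
  have hAC : ⋃ n, A n ≤ᶠ[cocountable] C :=
    iUnion_eventuallyLE fun n => hπ.le_of_map ((subset_iUnion _ n).eventuallyLE.trans hC.symm.le)
  exact ((hπ.mono hAC).trans hC.le).antisymm
    (iUnion_eventuallyLE fun n => hπ.mono (subset_iUnion A n).eventuallyLE)

end IsAutoRep

section CantorSpace

variable {ι L : Type*} {l : Filter L}

theorem measurableSet_cylinder (n : ι) : MeasurableSet {x : ι → Bool | x n = true} :=
  measurable_pi_apply (X := fun _ : ι => Bool) n (measurableSet_singleton true)

theorem eventuallyEq_preimage_of_cylinders [CountableInterFilter l] {φ : Set (ι → Bool) → Set L}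
    {y : L → ι → Bool} (hempty : φ ∅ =ᶠ[l] (∅ : Set L))
    (hcompl : ∀ B, φ Bᶜ =ᶠ[l] (φ B)ᶜ)
    (hiUnion : ∀ B : ℕ → Set (ι → Bool), φ (⋃ n, B n) =ᶠ[l] ⋃ n, φ (B n))
    (hcyl : ∀ n, φ {x | x n = true} =ᶠ[l] y ⁻¹' {x | x n = true})
    {B : Set (ι → Bool)} (hB : MeasurableSet B) : φ B =ᶠ[l] y ⁻¹' B := by
  let M : MeasurableSpace (ι → Bool) :=
    { MeasurableSet' := fun B => φ B =ᶠ[l] y ⁻¹' B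
      measurableSet_empty := hempty
      measurableSet_compl := fun B hB => (hcompl B).trans hB.compl
      measurableSet_iUnion := fun B hB => by
        rw [preimage_iUnion]
        exact (hiUnion B).trans (Filter.EventuallyEq.countable_iUnion hB) }
  have hid : @Measurable _ _ M MeasurableSpace.pi (id : (ι → Bool) → ι → Bool) :=
    measurable_pi_iff.2 fun n => measurable_to_bool (f := fun x : ι → Bool => x n) (hcyl n)
  exact hid hB

theorem eventuallyEq_of_preimage_cylinders [Countable ι] [CountableInterFilter l]
    {u v : L → ι → Bool}
    (h : ∀ n, u ⁻¹' {x | x n = true} =ᶠ[l] v ⁻¹' {x | x n = true}) : u =ᶠ[l] v := by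
  filter_upwards [eventually_countable_forall.2 fun n => eventuallyEq_set.1 (h n)] with a ha
  funext n
  exact Bool.eq_iff_iff.2 (ha n)

end CantorSpace

theorem measurableSet_borel_iff {α : Type*} [TopologicalSpace α] [MeasurableSpace α]
    [BorelSpace α] {B : Set α} : MeasurableSet[borel α] B ↔ MeasurableSet B := by
  rw [← BorelSpace.measurable_eq]

theorem IsQB.exists_preimage_eq {X : Set Cantor} (hX : IsQB X) {L : Type*} {h : L → Cantor}
    (hh : Injective h) (hhX : range h ⊆ X) (A : Set L) :
    ∃ B, MeasurableSet B ∧ h ⁻¹' B = A := by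
  obtain ⟨B, hB, hBX⟩ := hX (h '' A) ((image_subset_range h A).trans hhX)
  refine ⟨B, measurableSet_borel_iff.1 hB, ?_⟩
  ext a
  rw [← hh.mem_set_image (s := A), ← hBX]
  simp [hhX (mem_range_self a)]

theorem isQB_of_exists_countable_symmDiff {Y : Set Cantor}
    (h : ∀ Z ⊆ Y, ∃ B, MeasurableSet B ∧ (symmDiff (B ∩ Y) Z).Countable) : IsQB Y := by
  intro Z hZY
  obtain ⟨B, hB, hBZ⟩ := h Z hZY
  have hDY : symmDiff (B ∩ Y) Z ⊆ Y :=
    symmDiff_subset_union.trans (union_subset inter_subset_right hZY)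
  refine ⟨symmDiff B (symmDiff (B ∩ Y) Z),
    measurableSet_borel_iff.2 (hB.symmDiff hBZ.measurableSet), ?_⟩
  rw [inter_symmDiff_distrib_right, inter_eq_left.2 hDY, symmDiff_symmDiff_cancel_left]

section InducedMap

variable {ι L : Type u} {π : Set L → Set L} {h y : L → ι → Bool}

noncomputable def inducedMap (π : Set L → Set L) (h : L → ι → Bool) (l : L) : ι → Bool :=
  fun n => (π (h ⁻¹' {x | x n = true})).boolIndicator l

theorem IsAutoRep.eventuallyEq_preimage_inducedMap (hπ : IsAutoRep (aleph 1) π)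
    {B : Set (ι → Bool)} (hB : MeasurableSet B) :
    π (h ⁻¹' B) =ᶠ[cocountable] inducedMap π h ⁻¹' B := by
  refine eventuallyEq_preimage_of_cylinders (φ := fun B => π (h ⁻¹' B)) hπ.empty
    (fun B => hπ.compl _) (fun B => ?_) (fun n => EventuallyEq.of_eq ?_) hB
  · rw [preimage_iUnion]
    exact hπ.iUnion _
  · ext l
    exact mem_iff_boolIndicator _ l

theorem IsAutoRep.countable_preimage_singleton (hπ : IsAutoRep (aleph 1) π)
    (hcode : ∀ A : Set L, ∃ B, MeasurableSet B ∧ h ⁻¹' B = A)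
    (hy : ∀ B, MeasurableSet B → π (h ⁻¹' B) =ᶠ[cocountable] y ⁻¹' B) (c : ι → Bool) :
    (y ⁻¹' {c}).Countable := by
  by_contra hF
  obtain ⟨A, hA⟩ := hπ.exists_eventuallyEq (y ⁻¹' {c})
  have hsmall : ∀ B, MeasurableSet B → c ∉ B → (A ∩ h ⁻¹' B).Countable := by
    intro B hB hcB
    have hle : π (A ∩ h ⁻¹' B) ≤ᶠ[cocountable] y ⁻¹' ({c} ∩ B) := by
      filter_upwards [(hπ.mono inter_subset_left.eventuallyLE).trans hA.le,
        (hπ.mono inter_subset_right.eventuallyLE).trans (hy B hB).le] with l hlc hlB hl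
      exact ⟨hlc hl, hlB hl⟩
    rwa [singleton_inter_eq_empty.2 hcB, preimage_empty, eventuallyLE_cocountable_iff,
      sdiff_empty, hπ.countable_iff] at hle
  obtain ⟨A₁, hA₁A, hA₁, hA₂⟩ :=
    exists_subset_not_countable_and_diff (mt hπ.countable_iff.2 (mt hA.countable_iff.1 hF))
  obtain ⟨B, hB, rfl⟩ := hcode A₁
  by_cases hcB : c ∈ B
  · exact hA₂ (by simpa [sdiff_eq] using hsmall Bᶜ hB.compl (not_not.2 hcB))
  · exact hA₁ (by simpa [inter_eq_right.2 hA₁A] using hsmall B hB hcB)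

theorem isTrivial_of_eventually_mem_range
    (hcode : ∀ A : Set L, ∃ B, MeasurableSet B ∧ h ⁻¹' B = A)
    (hy : ∀ B, MeasurableSet B → π (h ⁻¹' B) =ᶠ[cocountable] y ⁻¹' B)
    (hrange : ∀ᶠ l in cocountable, y l ∈ range h) : IsTrivial (aleph 1) π := by
  classical
  refine ⟨fun l => if hl : y l ∈ range h then hl.choose else l, fun A => sim_aleph_one_iff.2 ?_⟩
  obtain ⟨B, hB, rfl⟩ := hcode A
  refine (hy B hB).trans ?_
  filter_upwards [hrange] with l hl
  change (y l ∈ B) = (h (if hl : y l ∈ range h then hl.choose else l) ∈ B)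
  rw [dif_pos hl, hl.choose_spec]

theorem CardPres.mk_preimage_add_aleph0_eq (hcp : CardPres (aleph 1) π)
    (hy : ∀ B, MeasurableSet B → π (h ⁻¹' B) =ᶠ[cocountable] y ⁻¹' B)
    (hfib : ∀ c, (y ⁻¹' {c}).Countable) {B : Set (ι → Bool)} (hB : MeasurableSet B) :
    #(↥(h ⁻¹' B)) + ℵ₀ = #(↥(B ∩ range y)) + ℵ₀ := by
  obtain ⟨C, hC, hAC⟩ := hcp (h ⁻¹' B)
  rw [← hC, ← mk_add_aleph0_eq_of_eventuallyEq ((hy B hB).symm.trans (sim_aleph_one_iff.1 hAC)),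
    mk_preimage_add_aleph0_eq_of_countable_fibers y hfib]

end InducedMap

theorem IsAutoRep.isQB_range {L : Type*} {π : Set L → Set L} {h y : L → Cantor}
    (hπ : IsAutoRep (aleph 1) π) (hcode : ∀ A : Set L, ∃ B, MeasurableSet B ∧ h ⁻¹' B = A)
    (hy : ∀ B, MeasurableSet B → π (h ⁻¹' B) =ᶠ[cocountable] y ⁻¹' B) : IsQB (range y) := by
  refine isQB_of_exists_countable_symmDiff fun Z hZ => ?_
  obtain ⟨A, hA⟩ := hπ.exists_eventuallyEq (y ⁻¹' Z)
  obtain ⟨B, hB, rfl⟩ := hcode A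
  refine ⟨B, hB, ?_⟩
  have hBZ : (y ⁻¹' symmDiff B Z).Countable := by
    rw [preimage_symmDiff]
    exact eventuallyEq_cocountable_iff.1 ((hy B hB).symm.trans hA)
  rw [← inter_eq_left.2 hZ, ← inter_symmDiff_distrib_right, ← image_preimage_eq_inter_range]
  exact hBZ.image y

theorem exists_isQB_of_not_isTrivial {X : Set Cantor} (hX : IsQB X) {L : Type} (e : L ≃ X)
    {π : Set L → Set L} (hπ : IsAutoRep (aleph 1) π) (hcp : CardPres (aleph 1) π)
    (hnt : ¬ IsTrivial (aleph 1) π) :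
    ∃ Y : Set Cantor, IsQB Y ∧ ¬ (symmDiff X Y).Countable ∧
      ∀ B, MeasurableSet B → #(↥(B ∩ X)) + ℵ₀ = #(↥(B ∩ Y)) + ℵ₀ := by
  set h : L → Cantor := Subtype.val ∘ e
  have hh : Injective h := Subtype.val_injective.comp e.injective
  have hrange : range h = X := by
    rw [range_comp, e.range_eq_univ, image_univ, Subtype.range_coe]
  have hcode := hX.exists_preimage_eq hh hrange.subset
  set y := inducedMap π h
  have hy (B : Set Cantor) (hB : MeasurableSet B) : π (h ⁻¹' B) =ᶠ[cocountable] y ⁻¹' B :=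
    hπ.eventuallyEq_preimage_inducedMap hB
  have hfib := hπ.countable_preimage_singleton hcode hy
  refine ⟨range y, hπ.isQB_range hcode hy, fun hXY => hnt ?_, fun B hB => ?_⟩
  · refine isTrivial_of_eventually_mem_range hcode hy ?_
    rw [hrange, Filter.Eventually, mem_cocountable]
    refine (hXY.preimage_of_countable_fibers hfib).mono fun l hl => ?_
    exact Or.inr ⟨mem_range_self l, hl⟩
  · rw [← hrange, ← mk_preimage_eq_mk_inter_range hh]
    exact hcp.mk_preimage_add_aleph0_eq hy hfib hB

section Recoding

variable {L : Type u} {h k : L → Cantor} {c : Set L → Set Cantor}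

theorem preimage_eventuallyEq_iff_of_mk_add_aleph0_eq
    (hhk : ∀ B, MeasurableSet B → #(↥(h ⁻¹' B)) + ℵ₀ = #(↥(k ⁻¹' B)) + ℵ₀)
    {B B' : Set Cantor} (hB : MeasurableSet B) (hB' : MeasurableSet B') :
    h ⁻¹' B =ᶠ[cocountable] h ⁻¹' B' ↔ k ⁻¹' B =ᶠ[cocountable] k ⁻¹' B' := by
  simp only [eventuallyEq_cocountable_iff, ← preimage_symmDiff]
  exact ⟨fun H => H.of_mk_add_aleph0_eq (hhk _ (hB.symmDiff hB')).symm,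
    fun H => H.of_mk_add_aleph0_eq (hhk _ (hB.symmDiff hB'))⟩

theorem preimage_code_eventuallyEq
    (hhk : ∀ B, MeasurableSet B → #(↥(h ⁻¹' B)) + ℵ₀ = #(↥(k ⁻¹' B)) + ℵ₀)
    (hcm : ∀ A, MeasurableSet (c A)) (hch : ∀ A, h ⁻¹' c A = A) {A : Set L} {B : Set Cantor}
    (hB : MeasurableSet B) (hAB : A =ᶠ[cocountable] h ⁻¹' B) :
    k ⁻¹' c A =ᶠ[cocountable] k ⁻¹' B :=
  (preimage_eventuallyEq_iff_of_mk_add_aleph0_eq hhk (hcm A) hB).1 (by rwa [hch])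

theorem isAutoRep_preimage_code
    (hhk : ∀ B, MeasurableSet B → #(↥(h ⁻¹' B)) + ℵ₀ = #(↥(k ⁻¹' B)) + ℵ₀)
    (hcm : ∀ A, MeasurableSet (c A)) (hch : ∀ A, h ⁻¹' c A = A)
    (hk : ∀ C : Set L, ∃ B, MeasurableSet B ∧ k ⁻¹' B = C) :
    IsAutoRep (aleph 1) (fun A => k ⁻¹' c A) := by
  have key : ∀ {A : Set L} {B : Set Cantor}, MeasurableSet B → A =ᶠ[cocountable] h ⁻¹' B →
      k ⁻¹' c A =ᶠ[cocountable] k ⁻¹' B :=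
    preimage_code_eventuallyEq hhk hcm hch
  refine isAutoRep_aleph_one_iff.2 ⟨fun A A' hA => key (hcm A') (by rwa [hch]),
    fun A A' => key ((hcm A).union (hcm A')) (.of_eq (by rw [preimage_union, hch, hch])),
    fun A => key (hcm A).compl (.of_eq (by rw [preimage_compl, hch])), fun C => ?_,
    fun A A' hA => ?_⟩
  · obtain ⟨B, hB, rfl⟩ := hk C
    exact ⟨h ⁻¹' B, key hB .rfl⟩
  · simpa only [hch] using (preimage_eventuallyEq_iff_of_mk_add_aleph0_eq hhk (hcm A) (hcm A')).2 hA

theorem cardPres_preimage_code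
    (hhk : ∀ B, MeasurableSet B → #(↥(h ⁻¹' B)) + ℵ₀ = #(↥(k ⁻¹' B)) + ℵ₀)
    (hcm : ∀ A, MeasurableSet (c A)) (hch : ∀ A, h ⁻¹' c A = A) :
    CardPres (aleph 1) (fun A => k ⁻¹' c A) := fun A => by
  obtain ⟨u, hu, hku⟩ :=
    exists_mk_eq_eventuallyEq_of_mk_add_aleph0_eq (s := A) (t := k ⁻¹' c A)
      (by rw [← hhk _ (hcm A), hch])
  exact ⟨u, hu, sim_aleph_one_iff.2 hku⟩

theorem not_isTrivial_preimage_code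
    (hhk : ∀ B, MeasurableSet B → #(↥(h ⁻¹' B)) + ℵ₀ = #(↥(k ⁻¹' B)) + ℵ₀)
    (hcm : ∀ A, MeasurableSet (c A)) (hch : ∀ A, h ⁻¹' c A = A)
    (hrange : ¬ (symmDiff (range h) (range k)).Countable) :
    ¬ IsTrivial (aleph 1) (fun A => k ⁻¹' c A) := by
  rintro ⟨f, hf⟩
  replace hf (A : Set L) : k ⁻¹' c A =ᶠ[cocountable] f ⁻¹' A := sim_aleph_one_iff.1 (hf A)
  have hkf : k =ᶠ[cocountable] h ∘ f := eventuallyEq_of_preimage_cylinders fun n =>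
    (preimage_code_eventuallyEq hhk hcm hch (measurableSet_cylinder n) .rfl).symm.trans (hf _)
  have hE := mem_cocountable.1 hkf
  apply hrange
  rw [Set.symmDiff_def]
  refine Countable.union ?_ ((hE.image k).mono ?_)
  · set A := h ⁻¹' (range k)ᶜ
    have hfA : (f ⁻¹' A).Countable :=
      hE.mono fun l hl hkl => hl ⟨l, hkl⟩
    have hA : A.Countable := by
      rw [← hch A]
      exact ((hf A).countable_iff.2 hfA).of_mk_add_aleph0_eq (hhk _ (hcm A))
    refine (hA.image h).mono ?_
    rintro _ ⟨⟨l, rfl⟩, hl⟩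
    exact ⟨l, hl, rfl⟩
  · rintro _ ⟨⟨l, rfl⟩, hl⟩
    exact ⟨l, fun hkl => hl ⟨f l, hkl.symm⟩, rfl⟩

end Recoding

theorem exists_not_isTrivial_of_isQB {X Y : Set Cantor} (hX : IsQB X) (hY : IsQB Y)
    (hXY : ¬ (symmDiff X Y).Countable)
    (hcard : ∀ B, MeasurableSet B → #(↥(B ∩ X)) + ℵ₀ = #(↥(B ∩ Y)) + ℵ₀) :
    ∃ π : Set X → Set X,
      IsAutoRep (aleph 1) π ∧ CardPres (aleph 1) π ∧ ¬ IsTrivial (aleph 1) π := by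
  have hXYcard : #X = #Y := by
    have hcard_univ := hcard univ MeasurableSet.univ
    simp only [univ_inter] at hcard_univ
    by_cases hXc : X.Countable
    · exact (mk_eq_of_mk_add_aleph0_eq hcard_univ.symm fun hYc =>
        hXY ((hXc.union hYc).mono symmDiff_subset_union)).symm
    · exact mk_eq_of_mk_add_aleph0_eq hcard_univ hXc
  obtain ⟨g⟩ := Cardinal.eq.1 hXYcard
  set k : X → Cantor := Subtype.val ∘ g
  have hk : Injective k := Subtype.val_injective.comp g.injective
  have hkrange : range k = Y := by
    rw [range_comp, g.range_eq_univ, image_univ, Subtype.range_coe]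
  choose c hcm hch using hX.exists_preimage_eq Subtype.val_injective Subtype.range_coe.subset
  have hhk (B : Set Cantor) (hB : MeasurableSet B) :
      #(↥(Subtype.val ⁻¹' B : Set X)) + ℵ₀ = #(↥(k ⁻¹' B)) + ℵ₀ := by
    rw [mk_preimage_eq_mk_inter_range Subtype.val_injective, mk_preimage_eq_mk_inter_range hk,
      Subtype.range_coe, hkrange]
    exact hcard B hB
  refine ⟨_, isAutoRep_preimage_code hhk hcm hch (hY.exists_preimage_eq hk hkrange.subset),
    cardPres_preimage_code hhk hcm hch, not_isTrivial_preimage_code hhk hcm hch ?_⟩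
  rwa [Subtype.range_coe, hkrange]

theorem stmt12_general (lam : Cardinal.{0})
    (X : Set Cantor) (hX : IsQB X) (hXcard : #(↥X) = lam) :
    (∃ (L : Type) (π : Set L → Set L), #L = lam ∧
        IsAutoRep (Cardinal.aleph 1) π ∧ CardPres (Cardinal.aleph 1) π ∧
        ¬ IsTrivial (Cardinal.aleph 1) π) ↔
    (∃ Y : Set Cantor, IsQB Y ∧ ¬ (symmDiff X Y).Countable ∧
        ∀ B : Set Cantor, @MeasurableSet Cantor (borel Cantor) B →
          #(↥(B ∩ X)) + ℵ₀ = #(↥(B ∩ Y)) + ℵ₀) := by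
  simp only [measurableSet_borel_iff]
  constructor
  · rintro ⟨L, π, hL, hπ, hcp, hnt⟩
    obtain ⟨e⟩ : Nonempty (L ≃ X) := Cardinal.eq.1 (hL.trans hXcard.symm)
    exact exists_isQB_of_not_isTrivial hX e hπ hcp hnt
  · rintro ⟨Y, hY, hXY, hcard⟩
    obtain ⟨π, hπ, hcp, hnt⟩ := exists_not_isTrivial_of_isQB hX hY hXY hcard
    exact ⟨X, π, hXcard, hπ, hcp, hnt⟩

/-- Given a `Q_B`-set `X` of cardinality `λ` with `cf(λ) > ω`, there is a nontrivial
cardinality-preserving automorphism of `P(λ)/Ctble` iff there is a `Q_B`-set `Y` with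
`X △ Y` uncountable which meets every Borel set in the same cardinality as `X` does
(modulo `ℵ₀`). -/
theorem stmt12 (lam : Cardinal.{0}) (hlam : ℵ₀ < lam.ord.cof)
    (X : Set Cantor) (hX : IsQB X) (hXcard : #(↥X) = lam) :
    (∃ (L : Type) (π : Set L → Set L), #L = lam ∧
        IsAutoRep (Cardinal.aleph 1) π ∧ CardPres (Cardinal.aleph 1) π ∧
        ¬ IsTrivial (Cardinal.aleph 1) π) ↔
    (∃ Y : Set Cantor, IsQB Y ∧ ¬ (symmDiff X Y).Countable ∧
        ∀ B : Set Cantor, @MeasurableSet Cantor (borel Cantor) B →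
          #(↥(B ∩ X)) + ℵ₀ = #(↥(B ∩ Y)) + ℵ₀) :=
  stmt12_general lam X hX hXcard
end

section
/- Assume that every subset of 2^ω of cardinality ℵ₁ is a Q_B-set (i.e. the cardinal invariant 𝔷 is greater than ℵ₁). Then every map representing an automorphism of P(ℝ)/Ctble is trivial. -/
open Cardinal Set

universe u

/-! ### Auxiliary material -/

namespace Stmt14Aux

variable {α : Type u}

lemma sim_iff {A B : Set α} :
    Sim (Cardinal.aleph 1) A B ↔ (symmDiff A B).Countable := by
  rw [Sim, Cardinal.countable_iff_lt_aleph_one]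

lemma csim_trans {A B C : Set α} (h1 : (symmDiff A B).Countable)
    (h2 : (symmDiff B C).Countable) : (symmDiff A C).Countable :=
  (h1.union h2).mono (symmDiff_triangle A B C)

lemma diff_subset_symmDiff {A B : Set α} : A \ B ⊆ symmDiff A B := by
  rw [Set.symmDiff_def]; exact Set.subset_union_left

lemma diff_subset_symmDiff' {A B : Set α} : B \ A ⊆ symmDiff A B := by
  rw [Set.symmDiff_def]; exact Set.subset_union_right

lemma symmDiff_empty_eq (A : Set α) : symmDiff A (∅ : Set α) = A := by
  rw [Set.symmDiff_def]; simp

lemma countable_symmDiff_of_countable {A B : Set α} (hA : A.Countable)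
    (hB : B.Countable) : (symmDiff A B).Countable := by
  refine (hA.union hB).mono ?_
  rw [Set.symmDiff_def]
  exact Set.union_subset (Set.diff_subset.trans Set.subset_union_left)
    (Set.diff_subset.trans Set.subset_union_right)

section Auto

variable {π : Set α → Set α} (hπ : IsAutoRep (Cardinal.aleph 1) π)

include hπ

lemma map_c {A B : Set α} (h : (symmDiff A B).Countable) :
    (symmDiff (π A) (π B)).Countable :=
  sim_iff.mp (hπ.1 A B (sim_iff.mpr h))

lemma union_c (A B : Set α) : (symmDiff (π (A ∪ B)) (π A ∪ π B)).Countable :=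
  sim_iff.mp (hπ.2.1 A B)

lemma compl_c (A : Set α) : (symmDiff (π Aᶜ) (π A)ᶜ).Countable :=
  sim_iff.mp (hπ.2.2.1 A)

lemma surj_c (B : Set α) : ∃ A : Set α, (symmDiff (π A) B).Countable := by
  obtain ⟨A, hA⟩ := hπ.2.2.2.1 B
  exact ⟨A, sim_iff.mp hA⟩

lemma inj_c {A B : Set α} (h : (symmDiff (π A) (π B)).Countable) :
    (symmDiff A B).Countable :=
  sim_iff.mp (hπ.2.2.2.2 A B (sim_iff.mpr h))

/-- `π ∅` is countable. -/
lemma pi_empty_c : (π ∅).Countable := by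
  obtain ⟨A₀, hA₀⟩ := surj_c hπ (∅ : Set α)
  have hA₀c : (π A₀).Countable := by
    rwa [symmDiff_empty_eq] at hA₀
  have hu := union_c hπ (∅ : Set α) A₀
  rw [Set.empty_union] at hu
  -- π ∅ ⊆ π A₀ ∪ symmDiff (π A₀) (π ∅ ∪ π A₀)
  have hsub : π (∅ : Set α) ⊆ π A₀ ∪ symmDiff (π A₀) (π ∅ ∪ π A₀) := by
    intro x hx
    by_cases h : x ∈ π A₀
    · exact Or.inl h
    · exact Or.inr (diff_subset_symmDiff' ⟨Or.inl hx, h⟩)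
  exact (hA₀c.union hu).mono hsub

/-- Monotonicity mod countable. -/
lemma mono_c {A B : Set α} (h : A ⊆ B) : (π A \ π B).Countable := by
  have hu := union_c hπ A B
  rw [Set.union_eq_self_of_subset_left h] at hu
  refine hu.mono ?_
  intro x hx
  exact diff_subset_symmDiff' ⟨Or.inl hx.1, hx.2⟩

/-- Countable sets map to countable sets. -/
lemma map_countable {A : Set α} (h : A.Countable) : (π A).Countable := by
  have h1 : (symmDiff A (∅ : Set α)).Countable := by rwa [symmDiff_empty_eq]
  have h2 := map_c hπ h1
  have hsub : π A ⊆ π (∅ : Set α) ∪ symmDiff (π A) (π ∅) := by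
    intro x hx
    by_cases hx2 : x ∈ π (∅ : Set α)
    · exact Or.inl hx2
    · exact Or.inr (diff_subset_symmDiff ⟨hx, hx2⟩)
  exact ((pi_empty_c hπ).union h2).mono hsub

/-- Reflection of countability. -/
lemma reflect_countable {A : Set α} (h : (π A).Countable) : A.Countable := by
  have h1 : (symmDiff (π A) (π (∅ : Set α))).Countable :=
    countable_symmDiff_of_countable h (pi_empty_c hπ)
  have h2 := inj_c hπ h1
  rwa [symmDiff_empty_eq] at h2

/-- Reflection of almost-inclusion. -/
lemma reflect_mono {A B : Set α} (h : (π A \ π B).Countable) :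
    (A \ B).Countable := by
  have h1 := union_c hπ A B
  have h2 : (symmDiff (π A ∪ π B) (π B)).Countable := by
    refine h.mono ?_
    intro x hx
    rw [Set.symmDiff_def] at hx
    rcases hx with hx | hx
    · rcases hx.1 with h3 | h3
      · exact ⟨h3, hx.2⟩
      · exact absurd h3 hx.2
    · exact absurd (Or.inr hx.1) hx.2
  have h3 := inj_c hπ (csim_trans h1 h2)
  refine h3.mono ?_
  intro x hx
  exact diff_subset_symmDiff ⟨Or.inl hx.1, hx.2⟩

/-- σ-additivity mod countable, hard direction. -/
lemma sigma_sub (B : ℕ → Set α) :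
    (π (⋃ n, B n) \ ⋃ n, π (B n)).Countable := by
  set U := ⋃ n, B n with hU
  set T := ⋃ n, π (B n) with hT
  obtain ⟨D, hD⟩ := surj_c hπ (π U \ T)
  -- D \ U is countable
  have hDU : (D \ U).Countable := by
    refine reflect_mono hπ (hD.mono ?_)
    intro x hx
    refine diff_subset_symmDiff ⟨hx.1, fun h => hx.2 h.1⟩
  -- each D ∩ B n is countable
  have hDB : ∀ n, (D ∩ B n).Countable := by
    intro n
    refine reflect_countable hπ ?_
    have hsub : π (D ∩ B n) ⊆
        (π (D ∩ B n) \ π D) ∪ (π (D ∩ B n) \ π (B n)) ∪ (π D ∩ π (B n)) := by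
      intro x hx
      by_cases h1 : x ∈ π D
      · by_cases h2 : x ∈ π (B n)
        · exact Or.inr ⟨h1, h2⟩
        · exact Or.inl (Or.inr ⟨hx, h2⟩)
      · exact Or.inl (Or.inl ⟨hx, h1⟩)
    have hint : (π D ∩ π (B n)).Countable := by
      refine hD.mono ?_
      intro x hx
      refine diff_subset_symmDiff ⟨hx.1, fun h => h.2 (Set.mem_iUnion.mpr ⟨n, hx.2⟩)⟩
    exact (((mono_c hπ Set.inter_subset_left).union
      (mono_c hπ Set.inter_subset_right)).union hint).mono hsub
  -- D is countable
  have hDc : D.Countable := by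
    have hsub : D ⊆ (D \ U) ∪ ⋃ n, (D ∩ B n) := by
      intro x hx
      by_cases h : x ∈ U
      · obtain ⟨n, hn⟩ := Set.mem_iUnion.mp h
        exact Or.inr (Set.mem_iUnion.mpr ⟨n, hx, hn⟩)
      · exact Or.inl ⟨hx, h⟩
    exact (hDU.union (Set.countable_iUnion hDB)).mono hsub
  have hπD : (π D).Countable := map_countable hπ hDc
  refine (hπD.union hD).mono ?_
  intro x hx
  by_cases h : x ∈ π D
  · exact Or.inl h
  · exact Or.inr (diff_subset_symmDiff' ⟨hx, h⟩)

/-- σ-additivity mod countable. -/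
lemma sigma_c (B : ℕ → Set α) :
    (symmDiff (π (⋃ n, B n)) (⋃ n, π (B n))).Countable := by
  have h1 := sigma_sub hπ B
  have h2 : ((⋃ n, π (B n)) \ π (⋃ n, B n)).Countable := by
    have : (⋃ n, π (B n)) \ π (⋃ n, B n) ⊆ ⋃ n, (π (B n) \ π (⋃ m, B m)) := by
      intro x hx
      obtain ⟨n, hn⟩ := Set.mem_iUnion.mp hx.1
      exact Set.mem_iUnion.mpr ⟨n, hn, hx.2⟩
    exact (Set.countable_iUnion fun n =>
      mono_c hπ (Set.subset_iUnion B n)).mono this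
  rw [Set.symmDiff_def]
  exact h1.union h2

end Auto

/-- Extract a subset of cardinality `ℵ₁` from an uncountable set. -/
lemma exists_subset_aleph1 {s : Set α} (h : ¬ s.Countable) :
    ∃ t, t ⊆ s ∧ #(↥t) = Cardinal.aleph 1 := by
  have h1 : Cardinal.aleph 1 ≤ #(↥s) := by
    rw [Cardinal.countable_iff_lt_aleph_one] at h
    exact not_lt.mp h
  obtain ⟨p, hp⟩ := Cardinal.le_mk_iff_exists_set.mp h1
  refine ⟨Subtype.val '' p, ?_, ?_⟩
  · rintro x ⟨y, _, rfl⟩; exact y.2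
  · rw [Cardinal.mk_image_eq Subtype.val_injective]; exact hp

lemma uncountable_of_aleph1 {s : Set α} (h : #(↥s) = Cardinal.aleph 1) :
    ¬ s.Countable := by
  rw [Cardinal.countable_iff_lt_aleph_one, h]
  exact lt_irrefl _

/-! ### The Cantor space part -/

/-- The basic bit sets. -/
def Dn (n : ℕ) : Set Cantor := {x : Cantor | x n = true}

open Classical in
/-- The candidate inducing function for an automorphism representation on Cantor space. -/
noncomputable def gmap (π : Set Cantor → Set Cantor) : Cantor → Cantor :=
  fun y n => if y ∈ π (Dn n) then true else false

lemma gmap_preimage_Dn (π : Set Cantor → Set Cantor) (n : ℕ) :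
    gmap π ⁻¹' (Dn n) = π (Dn n) := by
  ext y
  simp only [gmap, Dn, Set.mem_preimage, Set.mem_setOf_eq]
  by_cases h : y ∈ π {x : Cantor | x n = true}
  · simp [h]
  · simp [h]

/-- Cylinder determined by a finite list of bits. -/
def cylL (p : List Bool) : Set Cantor :=
  {y : Cantor | ∀ i < p.length, y i = p.getD i true}

lemma countable_cyl_family (U : Set Cantor) :
    {c : Set Cantor | (∃ p : List Bool, c = cylL p) ∧ c ⊆ U}.Countable := by
  have : {c : Set Cantor | (∃ p : List Bool, c = cylL p) ∧ c ⊆ U} ⊆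
      Set.range cylL := by
    rintro c ⟨⟨p, rfl⟩, -⟩
    exact ⟨p, rfl⟩
  exact (Set.countable_range cylL).mono this

/-- Every open subset of Cantor space is the union of the cylinders it contains. -/
lemma open_eq_sUnion_cyl {U : Set Cantor} (hU : IsOpen U) :
    U = ⋃₀ {c : Set Cantor | (∃ p : List Bool, c = cylL p) ∧ c ⊆ U} := by
  apply Set.Subset.antisymm
  · intro y hy
    obtain ⟨I, u, hIu, hsub⟩ := isOpen_pi_iff.mp hU y hy
    set n : ℕ := I.sup (fun i => i + 1) with hn
    have hIn : ∀ i ∈ I, i < n := by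
      intro i hi
      exact Nat.lt_of_lt_of_le (Nat.lt_succ_self i) (Finset.le_sup (f := fun i => i + 1) hi)
    set p : List Bool := List.ofFn (fun i : Fin n => y i) with hp
    have hplen : p.length = n := by simp [hp]
    have hpget : ∀ i < n, p.getD i true = y i := by
      intro i hi
      rw [hp]
      rw [List.getD_eq_getElem?_getD]
      simp [List.getElem?_ofFn, hi]
    refine Set.mem_sUnion.mpr ⟨cylL p, ⟨⟨p, rfl⟩, ?_⟩, ?_⟩
    · -- cylL p ⊆ U
      intro z hz
      apply hsub
      intro i hi
      have hiI : i ∈ I := hi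
      have h1 : z i = y i := by
        have := hz i (by rw [hplen]; exact hIn i hiI)
        rw [this, hpget i (hIn i hiI)]
      rw [h1]
      exact (hIu i hiI).2
    · -- y ∈ cylL p
      intro i hi
      rw [hplen] at hi
      exact (hpget i hi).symm
  · intro y hy
    obtain ⟨c, ⟨-, hcU⟩, hyc⟩ := hy
    exact hcU hyc

/-- `{z}ᶜ` is open, so singletons are Borel. -/
lemma borel_singleton (z : Cantor) :
    @MeasurableSet Cantor (borel Cantor) {z} := by
  have hopen : IsOpen ({z}ᶜ : Set Cantor) := by
    have : ({z}ᶜ : Set Cantor) = ⋃ n, (fun y : Cantor => y n) ⁻¹' {z n}ᶜ := by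
      ext y
      simp only [Set.mem_compl_iff, Set.mem_singleton_iff, Set.mem_iUnion,
        Set.mem_preimage]
      constructor
      · intro h
        by_contra hc
        push_neg at hc
        exact h (funext fun n => by simpa using hc n)
      · rintro ⟨n, hn⟩ rfl
        exact hn rfl
    rw [this]
    exact isOpen_iUnion fun n =>
      (continuous_apply n).isOpen_preimage _ (isOpen_compl_singleton)
  have h1 : @MeasurableSet Cantor (borel Cantor) ({z}ᶜ) :=
    MeasurableSpace.measurableSet_generateFrom hopen
  simpa using h1.compl

section Lifting

variable {π : Set Cantor → Set Cantor}

/-- The Borel lifting lemma: on Borel sets, `π` agrees with `(gmap π)⁻¹` mod countable. -/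
lemma lifting (hπ : IsAutoRep (Cardinal.aleph 1) π) :
    ∀ B : Set Cantor, @MeasurableSet Cantor (borel Cantor) B →
      (symmDiff (π B) (gmap π ⁻¹' B)).Countable := by
  set g := gmap π with hg
  let m : MeasurableSpace Cantor :=
    { MeasurableSet' := fun S => (symmDiff (π S) (g ⁻¹' S)).Countable
      measurableSet_empty := by
        simp only [Set.preimage_empty]
        exact countable_symmDiff_of_countable (pi_empty_c hπ) Set.countable_empty
      measurableSet_compl := by
        intro S hS
        have h1 := compl_c hπ S
        have h2 : (symmDiff ((π S)ᶜ) ((g ⁻¹' S)ᶜ)).Countable := by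
          rw [compl_symmDiff_compl]
          exact hS
        rw [Set.preimage_compl]
        exact csim_trans h1 h2
      measurableSet_iUnion := by
        intro f hf
        have h1 := sigma_c hπ f
        have h2 : (symmDiff (⋃ n, π (f n)) (⋃ n, g ⁻¹' (f n))).Countable := by
          refine (Set.countable_iUnion hf).mono ?_
          intro x hx
          rw [Set.symmDiff_def] at hx
          rcases hx with hx | hx
          · obtain ⟨n, hn⟩ := Set.mem_iUnion.mp hx.1
            refine Set.mem_iUnion.mpr ⟨n, ?_⟩
            exact diff_subset_symmDiff ⟨hn, fun h => hx.2 (Set.mem_iUnion.mpr ⟨n, h⟩)⟩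
          · obtain ⟨n, hn⟩ := Set.mem_iUnion.mp hx.1
            refine Set.mem_iUnion.mpr ⟨n, ?_⟩
            exact diff_subset_symmDiff' ⟨hn, fun h => hx.2 (Set.mem_iUnion.mpr ⟨n, h⟩)⟩
        rw [Set.preimage_iUnion]
        exact csim_trans h1 h2 }
  have hbit : ∀ n : ℕ, ∀ b : Bool, m.MeasurableSet' {y : Cantor | y n = b} := by
    intro n b
    have hDnm : m.MeasurableSet' (Dn n) := by
      show (symmDiff (π (Dn n)) (g ⁻¹' (Dn n))).Countable
      rw [hg, gmap_preimage_Dn, symmDiff_self]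
      exact Set.countable_empty
    cases b
    · have : {y : Cantor | y n = false} = (Dn n)ᶜ := by
        ext y; simp [Dn]
      rw [this]
      exact m.measurableSet_compl _ hDnm
    · exact hDnm
  have hcyl : ∀ p : List Bool, m.MeasurableSet' (cylL p) := by
    intro p
    have hT : ∀ n : ℕ, m.MeasurableSet'
        (if n < p.length then {y : Cantor | y n = p.getD n true} else Set.univ) := by
      intro n
      by_cases h : n < p.length
      · rw [if_pos h]; exact hbit n (p.getD n true)
      · rw [if_neg h]
        have : (Set.univ : Set Cantor) = (∅ : Set Cantor)ᶜ := by simp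
        rw [this]
        exact m.measurableSet_compl _ m.measurableSet_empty
    have heq : cylL p = (⋃ n, (if n < p.length then
        {y : Cantor | y n = p.getD n true} else Set.univ)ᶜ)ᶜ := by
      ext y
      simp only [cylL, Set.mem_setOf_eq, Set.mem_compl_iff, Set.mem_iUnion, not_exists]
      constructor
      · intro h n
        by_cases hn : n < p.length
        · simp only [if_pos hn, Set.mem_compl_iff, Set.mem_setOf_eq, not_not]
          exact h n hn
        · simp [if_neg hn]
      · intro h n hn
        have := h n
        rw [if_pos hn] at this
        simpa using this
    rw [heq]
    exact m.measurableSet_compl _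
      (m.measurableSet_iUnion _ fun n => m.measurableSet_compl _ (hT n))
  have hle : borel Cantor ≤ m := by
    refine MeasurableSpace.generateFrom_le ?_
    intro U hU
    have hUopen : IsOpen U := hU
    have heq := open_eq_sUnion_cyl hUopen
    have hfam := countable_cyl_family U
    have : m.MeasurableSet' (⋃₀ {c : Set Cantor | (∃ p : List Bool, c = cylL p) ∧ c ⊆ U}) := by
      refine @MeasurableSet.sUnion Cantor m _ hfam ?_
      rintro c ⟨⟨p, rfl⟩, -⟩
      exact hcyl p
    rw [heq]
    exact this
  intro B hB
  exact hle B hB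

/-- One half of the main statement on Cantor space. -/
lemma main_half (hz : ∀ X : Set Cantor, #(↥X) = Cardinal.aleph 1 → IsQB X)
    (hπ : IsAutoRep (Cardinal.aleph 1) π) (A : Set Cantor) :
    (π A \ gmap π ⁻¹' A).Countable := by
  by_contra hE
  set g := gmap π with hg
  set E := π A \ g ⁻¹' A with hEdef
  -- fibers of g are countable
  have hfib : ∀ z : Cantor, (g ⁻¹' {z}).Countable := by
    intro z
    have h1 := lifting hπ {z} (borel_singleton z)
    have h2 : (π {z}).Countable := map_countable hπ (Set.countable_singleton z)
    have hsub : g ⁻¹' {z} ⊆ π {z} ∪ symmDiff (π {z}) (g ⁻¹' {z}) := by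
      intro x hx
      by_cases h : x ∈ π {z}
      · exact Or.inl h
      · exact Or.inr (diff_subset_symmDiff' ⟨hx, h⟩)
    exact (h2.union h1).mono hsub
  -- g '' E is uncountable
  have hgE : ¬ (g '' E).Countable := by
    intro h
    apply hE
    have hsub : E ⊆ ⋃ z ∈ g '' E, (g ⁻¹' {z}) := by
      intro y hy
      exact Set.mem_biUnion (Set.mem_image_of_mem g hy) rfl
    exact (h.biUnion fun z _ => hfib z).mono hsub
  obtain ⟨Z, hZE, hZcard⟩ := exists_subset_aleph1 hgE
  have hZunc : ¬ Z.Countable := uncountable_of_aleph1 hZcard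
  -- Z is disjoint from A
  have hZA : ∀ z ∈ Z, z ∉ A := by
    intro z hzZ hzA
    obtain ⟨y, hyE, rfl⟩ := hZE hzZ
    exact hyE.2 hzA
  set E₁ := E ∩ g ⁻¹' Z with hE₁def
  have hE₁unc : ¬ E₁.Countable := by
    intro h
    apply hZunc
    refine (h.image g).mono ?_
    intro z hzZ
    obtain ⟨y, hyE, rfl⟩ := hZE hzZ
    exact ⟨y, ⟨hyE, hzZ⟩, rfl⟩
  obtain ⟨C₀, hC₀⟩ := surj_c hπ E₁
  -- C₀ \ A is countable
  have hE₁subπA : E₁ ⊆ π A := fun y hy => hy.1.1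
  have hC₀A : (C₀ \ A).Countable := by
    refine reflect_mono hπ (hC₀.mono ?_)
    intro x hx
    exact diff_subset_symmDiff ⟨hx.1, fun h => hx.2 (hE₁subπA h)⟩
  set C₁ := C₀ ∩ A with hC₁def
  have hC₁E : (symmDiff (π C₁) E₁).Countable := by
    have h1 : (symmDiff C₁ C₀).Countable := by
      refine hC₀A.mono ?_
      intro x hx
      rw [Set.symmDiff_def] at hx
      rcases hx with hx | hx
      · have hx1 : x ∈ C₀ ∩ A := hx.1
        exact absurd hx1.1 hx.2
      · refine ⟨hx.1, fun h => hx.2 ?_⟩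
        exact (⟨hx.1, h⟩ : x ∈ C₀ ∩ A)
    exact csim_trans (map_c hπ h1) hC₀
  have hC₁unc : ¬ C₁.Countable := by
    intro h
    apply hE₁unc
    have h2 : (π C₁).Countable := map_countable hπ h
    have hsub : E₁ ⊆ π C₁ ∪ symmDiff (π C₁) E₁ := by
      intro x hx
      by_cases h3 : x ∈ π C₁
      · exact Or.inl h3
      · exact Or.inr (diff_subset_symmDiff' ⟨hx, h3⟩)
    exact (h2.union hC₁E).mono hsub
  obtain ⟨C, hCC₁, hCcard⟩ := exists_subset_aleph1 hC₁unc
  have hCA : C ⊆ A := hCC₁.trans Set.inter_subset_right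
  have hπCunc : ¬ (π C).Countable := by
    intro h
    exact uncountable_of_aleph1 hCcard (reflect_countable hπ h)
  set W := π C ∩ E₁ with hWdef
  have hWunc : ¬ W.Countable := by
    intro h
    apply hπCunc
    have h1 : (π C \ E₁).Countable := by
      have hsub : π C \ E₁ ⊆ (π C \ π C₁) ∪ symmDiff (π C₁) E₁ := by
        intro x hx
        by_cases h2 : x ∈ π C₁
        · exact Or.inr (diff_subset_symmDiff ⟨h2, hx.2⟩)
        · exact Or.inl ⟨hx.1, h2⟩
      exact ((mono_c hπ hCC₁).union hC₁E).mono hsub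
    have hsub : π C ⊆ W ∪ (π C \ E₁) := by
      intro x hx
      by_cases h2 : x ∈ E₁
      · exact Or.inl ⟨hx, h2⟩
      · exact Or.inr ⟨hx, h2⟩
    exact (h.union h1).mono hsub
  -- the Q_B set X = C ∪ Z
  set X := C ∪ Z with hXdef
  have hXcard : #(↥X) = Cardinal.aleph 1 := by
    apply le_antisymm
    · calc #(↥X) ≤ #(↥C) + #(↥Z) := Cardinal.mk_union_le C Z
        _ = Cardinal.aleph 1 := by
            rw [hCcard, hZcard]
            exact Cardinal.add_eq_self (Cardinal.aleph0_le_aleph 1)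
    · rw [← hCcard]
      exact Cardinal.mk_le_mk_of_subset Set.subset_union_left
  obtain ⟨B, hBmeas, hBX⟩ := hz X hXcard C Set.subset_union_left
  have hCB : C ⊆ B := by
    intro x hx
    have : x ∈ B ∩ X := hBX.symm ▸ hx
    exact this.1
  have hZB : ∀ z ∈ Z, z ∉ B := by
    intro z hzZ hzB
    have h1 : z ∈ B ∩ X := ⟨hzB, Or.inr hzZ⟩
    rw [hBX] at h1
    exact hZA z hzZ (hCA h1)
  have hlift := lifting hπ B hBmeas
  -- W \ g⁻¹ B is countable
  have h1 : (W \ g ⁻¹' B).Countable := by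
    have hsub : W \ g ⁻¹' B ⊆ (π C \ π B) ∪ symmDiff (π B) (g ⁻¹' B) := by
      intro x hx
      by_cases h2 : x ∈ π B
      · exact Or.inr (diff_subset_symmDiff ⟨h2, hx.2⟩)
      · exact Or.inl ⟨hx.1.1, h2⟩
    exact ((mono_c hπ hCB).union hlift).mono hsub
  -- but W is disjoint from g⁻¹ B
  have h2 : W ⊆ W \ g ⁻¹' B := by
    intro y hy
    refine ⟨hy, fun hyB => ?_⟩
    have hgyZ : g y ∈ Z := hy.2.2
    exact hZB (g y) hgyZ hyB
  exact hWunc (h1.mono h2)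

/-- The main statement on Cantor space. -/
lemma main_cantor (hz : ∀ X : Set Cantor, #(↥X) = Cardinal.aleph 1 → IsQB X)
    (hπ : IsAutoRep (Cardinal.aleph 1) π) :
    IsTrivial (Cardinal.aleph 1) π := by
  refine ⟨gmap π, fun A => sim_iff.mpr ?_⟩
  have h1 := main_half hz hπ A
  have h2 : (gmap π ⁻¹' A \ π A).Countable := by
    have h3 := main_half hz hπ Aᶜ
    have hc := compl_c hπ A
    have hsub : gmap π ⁻¹' A \ π A ⊆
        (π Aᶜ \ gmap π ⁻¹' Aᶜ) ∪ symmDiff (π Aᶜ) ((π A)ᶜ) := by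
      intro y hy
      by_cases h4 : y ∈ π Aᶜ
      · refine Or.inl ⟨h4, fun hpre => ?_⟩
        exact hpre hy.1
      · exact Or.inr (diff_subset_symmDiff' ⟨hy.2, h4⟩)
    exact (h3.union hc).mono hsub
  rw [Set.symmDiff_def]
  exact h1.union h2

end Lifting

/-! ### Transport between `ℝ` and Cantor space -/

section Transport

variable {β γ : Type u} (e : β ≃ γ)

lemma image_countable_iff {S : Set β} : (e '' S).Countable ↔ S.Countable := by
  constructor
  · intro h
    have := h.preimage e.injective
    rwa [Set.preimage_image_eq S e.injective] at this
  · exact fun h => h.image e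

lemma image_symmDiff_eq (S T : Set β) :
    e '' symmDiff S T = symmDiff (e '' S) (e '' T) :=
  Set.image_symmDiff e.injective S T

lemma preimage_symmDiff_eq (S T : Set γ) :
    e ⁻¹' symmDiff S T = symmDiff (e ⁻¹' S) (e ⁻¹' T) := by
  simp only [Set.symmDiff_def, Set.preimage_union, Set.preimage_diff]

/-- Transport of an automorphism representation along a bijection. -/
lemma autorep_transport {π : Set β → Set β}
    (hπ : IsAutoRep (Cardinal.aleph 1) π) :
    IsAutoRep (Cardinal.aleph 1) (fun S => e '' π (e ⁻¹' S)) := by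
  refine ⟨?_, ?_, ?_, ?_, ?_⟩
  · intro S T h
    rw [sim_iff] at h ⊢
    rw [← image_symmDiff_eq]
    rw [image_countable_iff]
    apply map_c hπ
    rw [← preimage_symmDiff_eq]
    exact h.preimage e.injective
  · intro S T
    rw [sim_iff]
    have h1 : e '' π (e ⁻¹' S) ∪ e '' π (e ⁻¹' T)
        = e '' (π (e ⁻¹' S) ∪ π (e ⁻¹' T)) := (Set.image_union e _ _).symm
    simp only [h1, Set.preimage_union, ← image_symmDiff_eq, image_countable_iff]
    exact union_c hπ _ _
  · intro S
    rw [sim_iff]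
    have h1 : (e '' π (e ⁻¹' S))ᶜ = e '' (π (e ⁻¹' S))ᶜ :=
      (Set.image_compl_eq e.bijective).symm
    simp only [Set.preimage_compl, h1, ← image_symmDiff_eq, image_countable_iff]
    exact compl_c hπ _
  · intro T
    obtain ⟨A, hA⟩ := surj_c hπ (e ⁻¹' T)
    refine ⟨e '' A, sim_iff.mpr ?_⟩
    have h1 : e ⁻¹' (e '' A) = A := Set.preimage_image_eq A e.injective
    have h2 : T = e '' (e ⁻¹' T) := (Set.image_preimage_eq T e.surjective).symm
    show (symmDiff (e '' π (e ⁻¹' (e '' A))) T).Countable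
    rw [h1, h2, ← image_symmDiff_eq, image_countable_iff]
    exact hA
  · intro S T h
    rw [sim_iff] at h ⊢
    rw [← image_symmDiff_eq, image_countable_iff] at h
    have h2 := inj_c hπ h
    rw [← preimage_symmDiff_eq] at h2
    have h3 := h2.image e
    rwa [Set.image_preimage_eq _ e.surjective] at h3

end Transport

end Stmt14Aux

open Stmt14Aux in
/-- If every subset of `2^ω` of cardinality `ℵ₁` is a `Q_B`-set (i.e. `𝔷 > ℵ₁`), then
every automorphism of `P(ℝ)/Ctble` is trivial. -/
theorem stmt14
    (hz : ∀ X : Set Cantor, #(↥X) = Cardinal.aleph 1 → IsQB X)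
    (π : Set ℝ → Set ℝ) (hπ : IsAutoRep (Cardinal.aleph 1) π) :
    IsTrivial (Cardinal.aleph 1) π := by
  have hcard : #ℝ = #Cantor := by
    have h1 : #Cantor = (2 : Cardinal) ^ Cardinal.aleph0 := by
      rw [show #Cantor = #Bool ^ #ℕ from (Cardinal.power_def Bool ℕ).symm]
      rw [Cardinal.mk_bool, Cardinal.mk_nat]
    rw [Cardinal.mk_real, h1, Cardinal.two_power_aleph0]
  obtain ⟨e⟩ := Cardinal.eq.mp hcard
  have hπ' : IsAutoRep (Cardinal.aleph 1) (fun S => e '' π (e ⁻¹' S)) :=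
    autorep_transport e hπ
  obtain ⟨g, hgtriv⟩ := main_cantor hz hπ'
  refine ⟨e.symm ∘ g ∘ e, fun A => sim_iff.mpr ?_⟩
  have h := sim_iff.mp (hgtriv (e '' A))
  simp only [Set.preimage_image_eq A e.injective] at h
  -- h : (symmDiff (e '' π A) (g ⁻¹' (e '' A))).Countable
  have hpre : (e.symm ∘ g ∘ e) ⁻¹' A = e ⁻¹' (g ⁻¹' (e '' A)) := by
    rw [Set.preimage_comp, Set.preimage_comp, Equiv.image_eq_preimage_symm]
  have hπA : π A = e ⁻¹' (e '' π A) := (Set.preimage_image_eq _ e.injective).symm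
  rw [hpre, hπA, ← preimage_symmDiff_eq]
  exact h.preimage e.injective
end

section
/- Let κ ≤ λ be infinite cardinals, let X be a set of cardinality λ, let π represent an automorphism of P(X)/I_κ, and let ρ : P(X) → P(X) be an inverse selector for π, i.e. π(ρ(A)) ∼_κ A for all A ⊆ X. Let η be an infinite regular cardinal with η ≠ cf(κ), and suppose ⟨A_α : α < η⟩ is a sequence of subsets of X such that: (1) for all α < β < η, |(π(A_α) ∪ ρ(A_α)) \ A_β| < κ; and (2) for all β < η, |⋃{A_α : α < β} \ A_β| < κ. Then ⋃{A_α : α < η} is a fixed point of π, i.e. π(⋃{A_α : α < η}) ∼_κ ⋃{A_α : α < η}. -/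
open Cardinal Set

universe u

/-!
Write `U` for the union of the chain. By (1), `π (A α)` and `ρ (A α)` are almost contained in
`A (α + 1) ⊆ U`; hence every `A α` is almost contained in `π U` and every `π (A α)` in `U`.
To pass from the pieces to `U` we use that a set meeting every `A α` in fewer than `κ` points
meets `U` in fewer than `κ` points: by (2) this reduces to the increasing chain of initial unions,
and an increasing chain of `κ`-small sets whose index order has regular cofinality `≠ cf κ` has
`κ`-small union (compare the lengths with `κ` and with `cf κ`). Applied to the complement of
`π U` this gives `U ⊆* π U`. Applied to a `V` with `π V ∼ Uᶜ` it gives `V ⊆* Uᶜ`, because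
`π (V ∩ A α)` is almost contained both in `Uᶜ` and in `U`; applying `π` and taking complements
yields `π U ⊆* U`.
-/

section

variable {X : Type u} {κ : Cardinal.{u}} {A B C : Set X}

/-- Almost inclusion `A ⊆* B` modulo `I_κ`. -/
def AlmostSubset (κ : Cardinal.{u}) (A B : Set X) : Prop :=
  #↥(A \ B) < κ

theorem mk_union_lt (hκ : ℵ₀ ≤ κ) {s t : Set X} (hs : #s < κ) (ht : #t < κ) : #↥(s ∪ t) < κ :=
  (mk_union_le s t).trans_lt (add_lt_of_lt hκ hs ht)

namespace AlmostSubset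

theorem of_subset (hκ : κ ≠ 0) (h : A ⊆ B) : AlmostSubset κ A B := by
  rw [AlmostSubset, sdiff_eq_empty.2 h, mk_eq_zero]
  exact pos_iff_ne_zero.2 hκ

theorem mono_left (h : AlmostSubset κ A B) {A' : Set X} (hA : A' ⊆ A) : AlmostSubset κ A' B :=
  (mk_le_mk_of_subset (sdiff_subset_sdiff_left hA)).trans_lt h

theorem mono_right (h : AlmostSubset κ A B) {B' : Set X} (hB : B ⊆ B') : AlmostSubset κ A B' :=
  (mk_le_mk_of_subset (sdiff_subset_sdiff_right hB)).trans_lt h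

theorem trans (hκ : ℵ₀ ≤ κ) (hAB : AlmostSubset κ A B) (hBC : AlmostSubset κ B C) :
    AlmostSubset κ A C :=
  (mk_le_mk_of_subset (sdiff_triangle A B C)).trans_lt (mk_union_lt hκ hAB hBC)

theorem inter (hκ : ℵ₀ ≤ κ) (hB : AlmostSubset κ A B) (hC : AlmostSubset κ A C) :
    AlmostSubset κ A (B ∩ C) := by
  rw [AlmostSubset, sdiff_inter]
  exact mk_union_lt hκ hB hC

theorem compl (h : AlmostSubset κ A B) : AlmostSubset κ Bᶜ Aᶜ := by
  rwa [AlmostSubset, compl_sdiff_compl]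

end AlmostSubset

theorem almostSubset_empty_iff : AlmostSubset κ A ∅ ↔ #A < κ := by
  rw [AlmostSubset, sdiff_empty]

theorem sim_union_iff_almostSubset : Sim κ (A ∪ B) B ↔ AlmostSubset κ A B := by
  have : symmDiff (A ∪ B) B = A \ B := by ext; simp [mem_symmDiff]; tauto
  rw [Sim, AlmostSubset, this]

theorem sim_of_almostSubset (hκ : ℵ₀ ≤ κ) (hAB : AlmostSubset κ A B) (hBA : AlmostSubset κ B A) :
    Sim κ A B := by
  rw [Sim, symmDiff_def]
  exact mk_union_lt hκ hAB hBA

namespace Sim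

theorem almostSubset (h : Sim κ A B) : AlmostSubset κ A B :=
  (mk_le_mk_of_subset (by rw [symmDiff_def]; exact subset_union_left)).trans_lt h

theorem symm (h : Sim κ A B) : Sim κ B A := by
  rwa [Sim, symmDiff_comm]

theorem trans (hκ : ℵ₀ ≤ κ) (hAB : Sim κ A B) (hBC : Sim κ B C) : Sim κ A C :=
  (mk_le_mk_of_subset (symmDiff_triangle A B C)).trans_lt (mk_union_lt hκ hAB hBC)

end Sim

namespace IsAutoRep

variable {π : Set X → Set X}

theorem almostSubset_map_iff (hκ : ℵ₀ ≤ κ) (hπ : IsAutoRep κ π) :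
    AlmostSubset κ (π A) (π B) ↔ AlmostSubset κ A B := by
  obtain ⟨hcongr, hunion, -, -, hinj⟩ := hπ
  rw [← sim_union_iff_almostSubset, ← sim_union_iff_almostSubset]
  exact ⟨fun h => hinj _ _ ((hunion A B).trans hκ h),
    fun h => (hunion A B).symm.trans hκ (hcongr _ _ h)⟩

theorem mk_lt_of_mk_map_lt (hκ : ℵ₀ ≤ κ) (hπ : IsAutoRep κ π) (h : #(π A) < κ) : #A < κ := by
  rw [← almostSubset_empty_iff, ← hπ.almostSubset_map_iff hκ]
  exact (mk_le_mk_of_subset sdiff_subset).trans_lt h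

end IsAutoRep

section MonotoneUnion

variable {ι : Type u} [LinearOrder ι] {T : ι → Set X}

theorem exists_forall_le_of_mk_lt_cof {α : Type u} (g : α → ι) (hα : #α < Order.cof ι) :
    ∃ i, ∀ a, g a ≤ i := by
  by_contra! h
  have hcof : IsCofinal (range g) := fun i => by
    obtain ⟨a, ha⟩ := h i
    exact ⟨g a, mem_range_self a, ha.le⟩
  exact ((Order.cof_le hcof).trans mk_range_le).not_gt hα

theorem mk_iUnion_le_cof_mul (hT : Monotone T) {μ : Cardinal.{u}} (hμ : ∀ i, #(T i) ≤ μ) :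
    #↥(⋃ i, T i) ≤ Order.cof ι * μ := by
  obtain ⟨C, hC, hCcard⟩ := Order.exists_cof_eq ι
  have hsub : (⋃ i, T i) ⊆ ⋃ c : C, T c := iUnion_subset fun i => by
    obtain ⟨c, hc, hic⟩ := hC i
    exact (hT hic).trans (subset_iUnion_of_subset ⟨c, hc⟩ subset_rfl)
  calc #↥(⋃ i, T i) ≤ #↥(⋃ c : C, T c) := mk_le_mk_of_subset hsub
    _ ≤ #C * ⨆ c : C, #(T c) := mk_iUnion_le _
    _ ≤ Order.cof ι * μ := by rw [hCcard]; gcongr; exact ciSup_le' fun c => hμ c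

theorem exists_le_mk_of_cof_ord_lt (hT : Monotone T) (hcof : κ.ord.cof < Order.cof ι)
    (h : ∀ μ < κ, ∃ i, μ < #(T i)) : ∃ i, κ ≤ #(T i) := by
  obtain ⟨s, hs, hscard⟩ := Order.exists_cof_eq κ.ord.ToType
  rw [Ordinal.cof_toType] at hscard
  choose g hg using fun x : s =>
    h (Ordinal.ToType.mk.symm x.1).1.card (Cardinal.lt_ord.1 (Ordinal.ToType.mk.symm x.1).2)
  obtain ⟨i, hi⟩ := exists_forall_le_of_mk_lt_cof g (hscard ▸ hcof)
  refine ⟨i, not_lt.1 fun hlt => ?_⟩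
  obtain ⟨x, hx, hle⟩ := hs (Ordinal.ToType.mk ⟨_, ord_lt_ord.2 hlt⟩)
  have : (Ordinal.ToType.mk.symm x).1 < (#(T i)).ord :=
    Cardinal.lt_ord.2 ((hg ⟨x, hx⟩).trans_le (mk_le_mk_of_subset (hT (hi _))))
  exact this.not_ge (Subtype.mono_coe _ (by simpa using Ordinal.ToType.mk.symm.monotone hle))

theorem exists_forall_mk_le_of_cof_ne (hT : Monotone T) (hcof : Order.cof ι ≠ κ.ord.cof)
    (hsmall : ∀ i, #(T i) < κ) : ∃ μ < κ, ∀ i, #(T i) ≤ μ := by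
  rcases hcof.lt_or_gt with hlt | hgt
  · obtain ⟨C, hC, hCcard⟩ := Order.exists_cof_eq ι
    refine ⟨⨆ c : C, #(T c), Cardinal.iSup_lt_of_lt_cof_ord (hCcard ▸ hlt) fun c => hsmall c,
      fun i => ?_⟩
    obtain ⟨c, hc, hic⟩ := hC i
    exact (mk_le_mk_of_subset (hT hic)).trans
      (le_ciSup (f := fun c : C => #(T c)) bddAbove_of_small ⟨c, hc⟩)
  · by_contra! h
    obtain ⟨i, hi⟩ := exists_le_mk_of_cof_ord_lt hT hgt h
    exact (hsmall i).not_ge hi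

theorem mk_iUnion_lt_of_monotone (hκ : ℵ₀ ≤ κ) (hreg : (Order.cof ι).IsRegular)
    (hcof : Order.cof ι ≠ κ.ord.cof) (hT : Monotone T) (hsmall : ∀ i, #(T i) < κ) :
    #↥(⋃ i, T i) < κ := by
  have hne : Order.cof ι ≠ κ := fun h => hcof (by rw [← h, hreg.cof_ord])
  rcases hne.lt_or_gt with hlt | hgt
  · obtain ⟨μ, hμ, hle⟩ := exists_forall_mk_le_of_cof_ne hT hcof hsmall
    exact (mk_iUnion_le_cof_mul hT hle).trans_lt (mul_lt_of_lt hκ hlt hμ)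
  · by_contra! hW
    obtain ⟨P, hPW, hP⟩ := le_mk_iff_exists_subset.1 hW
    choose g hg using fun x : P => mem_iUnion.1 (hPW x.2)
    obtain ⟨i, hi⟩ := exists_forall_le_of_mk_lt_cof g (hP ▸ hgt)
    have hPi : P ⊆ T i := fun x hx => hT (hi ⟨x, hx⟩) (hg ⟨x, hx⟩)
    exact (hsmall i).not_ge (hP ▸ mk_le_mk_of_subset hPi)

end MonotoneUnion

theorem mk_biUnion_lt_ord_of_monotone {η : Cardinal.{u}} (hκ : ℵ₀ ≤ κ) (hη : η.IsRegular)
    (hηκ : η ≠ κ.ord.cof) {T : Ordinal.{u} → Set X} (hT : Monotone T)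
    (hsmall : ∀ β < η.ord, #(T β) < κ) : #↥(⋃ β < η.ord, T β) < κ := by
  have hcof : Order.cof η.ord.ToType = η := by rw [Ordinal.cof_toType, hη.cof_ord]
  have hunion : (⋃ β < η.ord, T β) = ⋃ x : η.ord.ToType, T (Ordinal.ToType.mk.symm x) := by
    ext y
    simp only [mem_iUnion]
    exact ⟨fun ⟨β, hβ, hy⟩ => ⟨Ordinal.ToType.mk ⟨β, hβ⟩, by simpa using hy⟩,
      fun ⟨x, hy⟩ => ⟨_, (Ordinal.ToType.mk.symm x).2, hy⟩⟩
  rw [hunion]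
  exact mk_iUnion_lt_of_monotone hκ (by rwa [hcof]) (by rwa [hcof])
    (hT.comp ((Subtype.mono_coe _).comp Ordinal.ToType.mk.symm.monotone))
    fun x => hsmall _ (Ordinal.ToType.mk.symm x).2

theorem mk_inter_biUnion_lt {η : Cardinal.{u}} (hκ : ℵ₀ ≤ κ) (hη : η.IsRegular)
    (hηκ : η ≠ κ.ord.cof) {A : Ordinal.{u} → Set X}
    (hA : ∀ β < η.ord, #↥((⋃ α < β, A α) \ A β) < κ) {C : Set X}
    (hC : ∀ β < η.ord, #↥(C ∩ A β) < κ) : #↥(C ∩ ⋃ α < η.ord, A α) < κ := by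
  have hunion : C ∩ ⋃ α < η.ord, A α = ⋃ β < η.ord, C ∩ ⋃ α ≤ β, A α := by
    ext x
    simp only [mem_inter_iff, mem_iUnion]
    constructor
    · rintro ⟨hxC, α, hα, hx⟩
      exact ⟨α, hα, hxC, α, le_rfl, hx⟩
    · rintro ⟨β, hβ, hxC, α, hαβ, hx⟩
      exact ⟨hxC, α, hαβ.trans_lt hβ, hx⟩
  have hmono : Monotone fun β => C ∩ ⋃ α ≤ β, A α := fun β γ hβγ =>
    inter_subset_inter_right C (iUnion₂_mono' fun α hα => ⟨α, hα.trans hβγ, subset_rfl⟩)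
  rw [hunion]
  refine mk_biUnion_lt_ord_of_monotone hκ hη hηκ hmono fun β hβ => ?_
  refine (mk_le_mk_of_subset ?_).trans_lt (mk_union_lt hκ (hA β hβ) (hC β hβ))
  rintro x ⟨hxC, hx⟩
  by_cases hxβ : x ∈ A β
  · exact Or.inr ⟨hxC, hxβ⟩
  · obtain ⟨α, hαβ, hxα⟩ := mem_iUnion₂.1 hx
    exact Or.inl ⟨mem_iUnion₂.2 ⟨α, hαβ.lt_of_ne (by rintro rfl; exact hxβ hxα), hxα⟩, hxβ⟩

namespace IsAutoRep

variable {π : Set X → Set X} {ι : Sort*} {S : ι → Set X} {U : Set X}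

theorem almostSubset_map_self (hκ : ℵ₀ ≤ κ) (hπ : IsAutoRep κ π) {ρ : Set X → Set X}
    (hρ : ∀ A, Sim κ (π (ρ A)) A) (hU : ∀ C, (∀ i, #↥(C ∩ S i) < κ) → #↥(C ∩ U) < κ)
    (hS : ∀ i, AlmostSubset κ (ρ (S i)) U) : AlmostSubset κ U (π U) := by
  have hSπ : ∀ i, AlmostSubset κ (S i) (π U) := fun i =>
    (hρ (S i)).symm.almostSubset.trans hκ ((hπ.almostSubset_map_iff hκ).2 (hS i))
  rw [AlmostSubset, sdiff_eq, inter_comm]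
  exact hU _ fun i => by simpa only [AlmostSubset, sdiff_eq, inter_comm] using hSπ i

theorem map_self_almostSubset (hκ : ℵ₀ ≤ κ) (hπ : IsAutoRep κ π)
    (hU : ∀ C, (∀ i, #↥(C ∩ S i) < κ) → #↥(C ∩ U) < κ)
    (hS : ∀ i, AlmostSubset κ (π (S i)) U) : AlmostSubset κ (π U) U := by
  have hκ0 : κ ≠ 0 := (aleph0_pos.trans_le hκ).ne'
  have ⟨_, _, hcompl, hsurj, _⟩ := hπ
  obtain ⟨V, hV⟩ := hsurj Uᶜ
  have hVS : ∀ i, #↥(V ∩ S i) < κ := fun i => by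
    refine hπ.mk_lt_of_mk_map_lt hκ (almostSubset_empty_iff.1 ?_)
    rw [← compl_inter_self U]
    refine AlmostSubset.inter hκ ?_ ?_
    · exact ((hπ.almostSubset_map_iff hκ).2 (.of_subset hκ0 inter_subset_left)).trans hκ
        hV.almostSubset
    · exact ((hπ.almostSubset_map_iff hκ).2 (.of_subset hκ0 inter_subset_right)).trans hκ (hS i)
  have hVU : AlmostSubset κ V Uᶜ := by
    rw [AlmostSubset, sdiff_compl]
    exact hU V hVS
  have hUc : AlmostSubset κ Uᶜ (π U)ᶜ :=
    (hV.symm.almostSubset.trans hκ ((hπ.almostSubset_map_iff hκ).2 hVU)).trans hκ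
      (hcompl U).almostSubset
  simpa only [compl_compl] using hUc.compl

end IsAutoRep

end

theorem stmt16_general {X : Type u} (κ : Cardinal.{u}) (hκ : ℵ₀ ≤ κ)
    (π : Set X → Set X) (hπ : IsAutoRep κ π)
    (ρ : Set X → Set X) (hρ : ∀ A : Set X, Sim κ (π (ρ A)) A)
    (η : Cardinal.{u}) (hηreg : η.IsRegular)
    (hηcf : η ≠ (κ.ord).cof)
    (A : Ordinal.{u} → Set X)
    (h1 : ∀ α β : Ordinal.{u}, α < β → β < η.ord →
      #(↥((π (A α) ∪ ρ (A α)) \ A β)) < κ)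
    (h2 : ∀ β : Ordinal.{u}, β < η.ord →
      #(↥((⋃ (α : Ordinal.{u}) (_ : α < β), A α) \ A β)) < κ) :
    Sim κ (π (⋃ (α : Ordinal.{u}) (_ : α < η.ord), A α))
      (⋃ (α : Ordinal.{u}) (_ : α < η.ord), A α) := by
  have hcover : ∀ C, (∀ β : Iio η.ord, #↥(C ∩ A β) < κ) →
      #↥(C ∩ ⋃ (α : Ordinal.{u}) (_ : α < η.ord), A α) < κ :=
    fun C hC => mk_inter_biUnion_lt hκ hηreg hηcf h2 fun β hβ => hC ⟨β, hβ⟩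
  have hnext : ∀ β : Iio η.ord,
      AlmostSubset κ (π (A β) ∪ ρ (A β)) (⋃ (α : Ordinal.{u}) (_ : α < η.ord), A α) :=
    fun ⟨β, hβ⟩ =>
      have hsucc := (isSuccLimit_ord hηreg.aleph0_le).succ_lt hβ
      AlmostSubset.mono_right (h1 β _ (Order.lt_succ β) hsucc)
        (subset_iUnion₂ (s := fun α (_ : α < η.ord) => A α) _ hsucc)
  exact sim_of_almostSubset hκ
    (hπ.map_self_almostSubset hκ hcover fun β => (hnext β).mono_left subset_union_left)
    (hπ.almostSubset_map_self hκ hρ hcover fun β => (hnext β).mono_left subset_union_right)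

/-- An increasing `η`-chain (for `η` regular, `η ≠ cf(κ)`) which almost absorbs images and
preimages under `π` has union a fixed point of `π`. -/
theorem stmt16 {X : Type u} (κ lam : Cardinal.{u}) (hκ : ℵ₀ ≤ κ)
    (hkl : κ ≤ lam) (hX : #X = lam)
    (π : Set X → Set X) (hπ : IsAutoRep κ π)
    (ρ : Set X → Set X) (hρ : ∀ A : Set X, Sim κ (π (ρ A)) A)
    (η : Cardinal.{u}) (hη : ℵ₀ ≤ η) (hηreg : η.IsRegular)
    (hηcf : η ≠ (κ.ord).cof)
    (A : Ordinal.{u} → Set X)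
    (h1 : ∀ α β : Ordinal.{u}, α < β → β < η.ord →
      #(↥((π (A α) ∪ ρ (A α)) \ A β)) < κ)
    (h2 : ∀ β : Ordinal.{u}, β < η.ord →
      #(↥((⋃ (α : Ordinal.{u}) (_ : α < β), A α) \ A β)) < κ) :
    Sim κ (π (⋃ (α : Ordinal.{u}) (_ : α < η.ord), A α))
      (⋃ (α : Ordinal.{u}) (_ : α < η.ord), A α) :=
  stmt16_general κ hκ π hπ ρ hρ η hηreg hηcf A h1 h2
end
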